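/- arXiv:1301.0516 — 3 statements merged into one kernel-verified Lean document; each statement's English description precedes it below -/
import Mathlib

section
/- If A = kQ/I is a triangular string algebra whose relations are all quadratic (e.g., a gentle triangular algebra), then ⁺⁻(0,1)_n is empty for n ≥ 2, and hence dim_k HH^n(A) = |⁻(0,0)⁻_n| for all n ≥ 2. -/
/-!
Common framework for formalizing "Hochschild cohomology of triangular string
algebras and its ring structure" (Redondo–Román).

* Interval combinatorics model of Bardzell's `n`-concatenations along a directed
  path (a directed path is modelled by the line `ℕ`, a subpath by an interval,
  and a relation by the interval it occupies).
* A combinatorial model of a bound quiver `(Q, I)` with `I` a monomial ideal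
  generated by a reduced set `R` of paths: paths are nonempty composable lists
  of arrows, `AP_n` is the set of supports of `n`-concatenations, `𝒫` is the
  basis of `A = kQ/I` given by the paths not in `I`.
* The Hochschild complex `Hom_{E-E}(kAP_n, A) ≅ k(AP_n ∥ 𝒫)` of a (triangular)
  monomial algebra obtained from Bardzell's minimal resolution, with its
  differentials `F_n` realized as explicit matrices, and the Hochschild
  cohomology `HH^n(A)` defined as the cohomology of this complex (for monomial
  algebras this complex computes Hochschild cohomology, by Bardzell's theorem).
-/

attribute [local instance] Classical.propDecidable

noncomputable section

namespace Paper

/-! ### Interval model of concatenations along a directed path -/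

/-- An interval `(s, t)` on the line `ℕ`: the model of a subpath of a fixed
directed path `T`, going from vertex `s` to vertex `t`. -/
abbrev Iv := ℕ × ℕ

/-- `R` is a reduced set of relations along a directed path: every relation is a
path of length at least two, and no relation divides another one. -/
structure RelSet (R : Set Iv) : Prop where
  len : ∀ r ∈ R, r.1 + 2 ≤ r.2
  nodiv : ∀ r ∈ R, ∀ r' ∈ R, r.1 ≤ r'.1 → r'.2 ≤ r.2 → r = r'

/-- The window from which the `(i+1)`-st relation (0-based index `i ≥ 1`) of a
concatenation is chosen: `L_1 = {p ∈ R : s(p_1) < s(p) < t(p_1)}` and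
`L_{j+1} = {p ∈ R : t(p_{j-1}) ≤ s(p) < t(p_j)}`. -/
def cWindow (R : Set Iv) (p : ℕ → Iv) (i : ℕ) : Set Iv :=
  if i = 1 then {q | q ∈ R ∧ (p 0).1 < q.1 ∧ q.1 < (p 0).2}
  else {q | q ∈ R ∧ (p (i - 2)).2 ≤ q.1 ∧ q.1 < (p (i - 1)).2}

/-- `IsConcat R k p` : the relations `p 0, p 1, …, p (k-1)` form a
`(k+1)`-concatenation `(p_1, …, p_k)` in Bardzell's sense: each `p i` (for
`1 ≤ i < k`) is a relation of the corresponding window with minimal source. -/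
def IsConcat (R : Set Iv) (k : ℕ) (p : ℕ → Iv) : Prop :=
  p 0 ∈ R ∧ ∀ i, 1 ≤ i → i < k →
    (p i ∈ cWindow R p i ∧ ∀ q ∈ cWindow R p i, (p i).1 ≤ q.1)

/-- The dual window: `L_1^{op} = {q ∈ R : s(q_1) < t(q) < t(q_1)}` and
`L_{j+1}^{op} = {q ∈ R : s(q_j) < t(q) ≤ s(q_{j-1})}`. -/
def oWindow (R : Set Iv) (q : ℕ → Iv) (i : ℕ) : Set Iv :=
  if i = 1 then {r | r ∈ R ∧ (q 0).1 < r.2 ∧ r.2 < (q 0).2}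
  else {r | r ∈ R ∧ (q (i - 1)).1 < r.2 ∧ r.2 ≤ (q (i - 2)).1}

/-- `IsOpConcat R k q` : the relations `q 0, …, q (k-1)` form a
`(k+1)`-op-concatenation `(q_{k}, …, q_1)` (so `q 0 = q_k` is built first and
`q^j = q (k - j)` in the paper's upper-index notation): each `q i` (for
`1 ≤ i < k`) is a relation of the corresponding dual window with maximal
target. -/
def IsOpConcat (R : Set Iv) (k : ℕ) (q : ℕ → Iv) : Prop :=
  q 0 ∈ R ∧ ∀ i, 1 ≤ i → i < k →
    (q i ∈ oWindow R q i ∧ ∀ r ∈ oWindow R q i, r.2 ≤ (q i).2)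

/-- `IsSupport R n w` : the interval `w` is the support of an
`n`-concatenation (for `n = 0` a vertex, for `n = 1` an arrow). -/
def IsSupport (R : Set Iv) : ℕ → Iv → Prop
  | 0, w => w.2 = w.1
  | 1, w => w.2 = w.1 + 1
  | (n + 2), w => ∃ p : ℕ → Iv, IsConcat R (n + 1) p ∧ (p 0).1 = w.1 ∧ (p n).2 = w.2

/-- `IsOpSupport R n w` : the interval `w` is the support of an
`n`-op-concatenation. -/
def IsOpSupport (R : Set Iv) : ℕ → Iv → Prop
  | 0, w => w.2 = w.1
  | 1, w => w.2 = w.1 + 1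
  | (n + 2), w => ∃ q : ℕ → Iv, IsOpConcat R (n + 1) q ∧ (q n).1 = w.1 ∧ (q 0).2 = w.2

/-! ### The combinatorial model of a monomial (string) bound quiver -/

/-- A finite quiver, given by raw data. -/
structure QuivData where
  V : Type
  E : Type
  src : E → V
  tgt : E → V

variable (Q : QuivData)

/-- A (nontrivial) path in `Q`: a nonempty composable list of arrows. -/
def IsPathL (l : List Q.E) : Prop :=
  l ≠ [] ∧ l.Chain' fun a b => Q.tgt a = Q.src b

/-- The source vertex of a nonempty list of arrows (as an `Option`). -/
def psrc (l : List Q.E) : Option Q.V := l.head?.map Q.src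

/-- The target vertex of a nonempty list of arrows (as an `Option`). -/
def ptgt (l : List Q.E) : Option Q.V := l.getLast?.map Q.tgt

/-- `l` lies in the (monomial) ideal `I = ⟨R⟩`: some relation divides `l`. -/
def inI (R : Set (List Q.E)) (l : List Q.E) : Prop := ∃ r ∈ R, r <:+: l

/-- `l` belongs to the canonical basis `𝒫` of `A = kQ/I`: a nontrivial path
not in `I`.  (Trivial paths `e_x` are treated separately.) -/
def isP (R : Set (List Q.E)) (l : List Q.E) : Prop := IsPathL Q l ∧ ¬ inI Q R l

/-- `(Q, R)` presents a **triangular string algebra**: relations are paths of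
length `≥ 2`, form a reduced (minimal) generating set, the string conditions
S1), S2) hold, and `Q` has no oriented cycles. -/
structure StringData (R : Set (List Q.E)) : Prop where
  relPath : ∀ r ∈ R, IsPathL Q r ∧ 2 ≤ r.length
  relMin : ∀ r ∈ R, ∀ r' ∈ R, r' <:+: r → r' = r
  srcTwo : ∀ v : Q.V, ∀ a b c : Q.E, Q.src a = v → Q.src b = v → Q.src c = v →
    a = b ∨ a = c ∨ b = c
  tgtTwo : ∀ v : Q.V, ∀ a b c : Q.E, Q.tgt a = v → Q.tgt b = v → Q.tgt c = v →
    a = b ∨ a = c ∨ b = c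
  uniqRight : ∀ a b c : Q.E, Q.tgt a = Q.src b → Q.tgt a = Q.src c →
    [a, b] ∉ R → [a, c] ∉ R → b = c
  uniqLeft : ∀ a b c : Q.E, Q.tgt b = Q.src a → Q.tgt c = Q.src a →
    [b, a] ∉ R → [c, a] ∉ R → b = c
  triangular : ∀ l : List Q.E, IsPathL Q l → psrc Q l ≠ ptgt Q l

/-- The subpath of `l` occupying the positions `[c.1, c.2)`. -/
def slice (l : List Q.E) (c : Iv) : List Q.E := (l.drop c.1).take (c.2 - c.1)

/-- The intervals of positions of `w` occupied by relations of `R`. -/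
def relIvs (R : Set (List Q.E)) (w : List Q.E) : Set Iv :=
  {c | c.1 < c.2 ∧ c.2 ≤ w.length ∧ slice Q w c ∈ R}

/-- `w ∈ AP_n` : `w` is the support of an `n`-concatenation of relations of
`R` (for `n = 1`, an arrow; the vertices `AP_0` are treated separately). -/
def IsAP (R : Set (List Q.E)) : ℕ → List Q.E → Prop
  | 0, _ => False
  | 1, w => IsPathL Q w ∧ w.length = 1
  | (n + 2), w => IsPathL Q w ∧ IsSupport (relIvs Q R w) (n + 2) (0, w.length)

/-- `w ∈ AP_n^{op}` : `w` is the support of an `n`-op-concatenation. -/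
def IsAPop (R : Set (List Q.E)) : ℕ → List Q.E → Prop
  | 0, _ => False
  | 1, w => IsPathL Q w ∧ w.length = 1
  | (n + 2), w => IsPathL Q w ∧ IsOpSupport (relIvs Q R w) (n + 2) (0, w.length)

/-- A pair of parallel paths. -/
abbrev Pr := List Q.E × List Q.E

/-- The set `(AP_n ∥ 𝒫)` of pairs `(ρ, γ)` with `ρ ∈ AP_n`, `γ ∈ 𝒫` and
`ρ, γ` parallel; it indexes a basis of `Hom_{E-E}(kAP_n, A)`. -/
def PairSet (R : Set (List Q.E)) (n : ℕ) : Set (Pr Q) :=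
  {x | IsAP Q R n x.1 ∧ isP Q R x.2 ∧ psrc Q x.1 = psrc Q x.2 ∧ ptgt Q x.1 = ptgt Q x.2}

/-- `ρ` and `γ` have the same first arrow. -/
def sharesFirst (x : Pr Q) : Prop := x.1.head? = x.2.head?

/-- `ρ` and `γ` have the same last arrow. -/
def sharesLast (x : Pr Q) : Prop := x.1.getLast? = x.2.getLast?

/-- The class `(0,0)_n`. -/
def cls00 (R : Set (List Q.E)) (n : ℕ) : Set (Pr Q) :=
  {x ∈ PairSet Q R n | ¬ sharesFirst Q x ∧ ¬ sharesLast Q x}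

/-- The class `(1,0)_n`. -/
def cls10 (R : Set (List Q.E)) (n : ℕ) : Set (Pr Q) :=
  {x ∈ PairSet Q R n | sharesFirst Q x ∧ ¬ sharesLast Q x}

/-- The class `(0,1)_n`. -/
def cls01 (R : Set (List Q.E)) (n : ℕ) : Set (Pr Q) :=
  {x ∈ PairSet Q R n | ¬ sharesFirst Q x ∧ sharesLast Q x}

/-- The class `(1,1)_n`. -/
def cls11 (R : Set (List Q.E)) (n : ℕ) : Set (Pr Q) :=
  {x ∈ PairSet Q R n | sharesFirst Q x ∧ sharesLast Q x}

/-- `Q_1 · γ ⊆ I` (left decoration `⁻`). -/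
def leftI (R : Set (List Q.E)) (γ : List Q.E) : Prop :=
  ∀ b : Q.E, some (Q.tgt b) = psrc Q γ → inI Q R (b :: γ)

/-- `γ · Q_1 ⊆ I` (right decoration `⁻`). -/
def rightI (R : Set (List Q.E)) (γ : List Q.E) : Prop :=
  ∀ b : Q.E, some (Q.src b) = ptgt Q γ → inI Q R (γ ++ [b])

/-- `Q_1 · γ̂ ⊆ I` where `γ = γ̂ α₂`, i.e. `γ̂ = γ.dropLast`. -/
def leftIHat (R : Set (List Q.E)) (γ : List Q.E) : Prop :=
  ∀ b : Q.E, some (Q.tgt b) = psrc Q γ → inI Q R (b :: γ.dropLast)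

/-- `γ̂ · Q_1 ⊆ I` where `γ = α₁ γ̂`, i.e. `γ̂ = γ.tail`. -/
def rightIHat (R : Set (List Q.E)) (γ : List Q.E) : Prop :=
  ∀ b : Q.E, some (Q.src b) = ptgt Q γ → inI Q R (γ.tail ++ [b])

/-- `⁻(0,0)⁻_n`. -/
def mm00 (R : Set (List Q.E)) (n : ℕ) : Set (Pr Q) :=
  {x ∈ cls00 Q R n | leftI Q R x.2 ∧ rightI Q R x.2}

/-- `⁻(0,1)_n`. -/
def m01 (R : Set (List Q.E)) (n : ℕ) : Set (Pr Q) :=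
  {x ∈ cls01 Q R n | leftI Q R x.2}

/-- `⁺⁻(0,1)_n`. -/
def pm01 (R : Set (List Q.E)) (n : ℕ) : Set (Pr Q) :=
  {x ∈ cls01 Q R n | leftI Q R x.2 ∧ ¬ leftIHat Q R x.2}

/-- `⁻⁻(0,1)_n`. -/
def mm01 (R : Set (List Q.E)) (n : ℕ) : Set (Pr Q) :=
  {x ∈ cls01 Q R n | leftI Q R x.2 ∧ leftIHat Q R x.2}

/-- `(1,0)_n⁻`. -/
def m10 (R : Set (List Q.E)) (n : ℕ) : Set (Pr Q) :=
  {x ∈ cls10 Q R n | rightI Q R x.2}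

/-! ### The Hochschild complex obtained from Bardzell's resolution -/

variable (k : Type) [Field k]

/-- The `(y, x)` matrix entry of the differential `F_n` of the Hochschild
complex: for `x = (w, γ) ∈ (AP_n ∥ 𝒫)` and `y = (ψ, γ') ∈ (AP_{n-1} ∥ 𝒫)`, the
signed number of ways of dividing `w = L(ψ) ψ R(ψ)` (with `L, R` not both
trivial) so that `γ = L(ψ) γ' R(ψ)`; the sign is `(-1)^n` for the division
with trivial `L(ψ)` (this reproduces `F_{2m}` and `F_{2m+1}` of the paper). -/
def coeffF (R : Set (List Q.E)) (n : ℕ) (y x : Pr Q) : k :=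
  ∑ᶠ c : Iv,
    if c.1 < c.2 ∧ c.2 ≤ x.1.length ∧ ¬(c.1 = 0 ∧ c.2 = x.1.length) ∧
        y.1 = slice Q x.1 c ∧ x.2 = x.1.take c.1 ++ y.2 ++ x.1.drop c.2 then
      (if c.1 = 0 then (-1 : k) ^ n else 1)
    else 0

/-- The differential `F_n : Hom_{E-E}(kAP_{n-1}, A) → Hom_{E-E}(kAP_n, A)`
(`n ≥ 2`), in the bases `(AP_{n-1} ∥ 𝒫)`, `(AP_n ∥ 𝒫)`. -/
def F (R : Set (List Q.E)) (n : ℕ) [Fintype ↥(PairSet Q R (n - 1))] :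
    (↥(PairSet Q R (n - 1)) → k) →ₗ[k] (↥(PairSet Q R n) → k) :=
  Matrix.mulVecLin (Matrix.of fun x y => coeffF Q k R n y.val x.val)

/-- The differential `F_1 : Hom_{E-E}(kAP_0, A) → Hom_{E-E}(kAP_1, A)`; for a
triangular algebra `Hom_{E-E}(kAP_0, A) ≅ kQ_0`. -/
def F1 (R : Set (List Q.E)) [Fintype Q.V] [Fintype ↥(PairSet Q R 1)] :
    (Q.V → k) →ₗ[k] (↥(PairSet Q R 1) → k) :=
  Matrix.mulVecLin (Matrix.of fun x v =>
    if x.val.2 = x.val.1 then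
      (if ptgt Q x.val.1 = some v then (1 : k) else 0) -
        (if psrc Q x.val.1 = some v then (1 : k) else 0)
    else 0)

/-- `HH^0(A) = Ker F_1`. -/
abbrev HH0 (R : Set (List Q.E)) [Fintype Q.V] [Fintype ↥(PairSet Q R 1)] :=
  ↥(LinearMap.ker (F1 Q k R))

/-- `HH^1(A) = Ker F_2 / Im F_1`. -/
abbrev HH1 (R : Set (List Q.E)) [Fintype Q.V] [∀ j, Fintype ↥(PairSet Q R j)] :=
  ↥(LinearMap.ker (F Q k R 2)) ⧸
    Submodule.comap (LinearMap.ker (F Q k R 2)).subtype (LinearMap.range (F1 Q k R))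

/-- `HH^n(A) = Ker F_{n+1} / Im F_n` for `n ≥ 2`. -/
abbrev HHn (R : Set (List Q.E)) (n : ℕ) [∀ j, Fintype ↥(PairSet Q R j)] :=
  ↥(LinearMap.ker (F Q k R (n + 1))) ⧸
    Submodule.comap (LinearMap.ker (F Q k R (n + 1))).subtype (LinearMap.range (F Q k R n))

/-- The underlying graph of `Q` is connected. -/
def connectedQ : Prop :=
  (SimpleGraph.fromRel fun u v => ∃ a : Q.E, Q.src a = u ∧ Q.tgt a = v).Connected

/-- The underlying graph of the finite quiver `Q` is a tree (connected with
`|Q_1| = |Q_0| - 1`). -/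
def IsTreeQuiv [Fintype Q.V] [Fintype Q.E] : Prop :=
  connectedQ Q ∧ Fintype.card Q.E + 1 = Fintype.card Q.V

/-- A monomial algebra is simply connected iff its quiver is a tree; we use
this characterization as the definition of simple connectedness. -/
def SimplyConnected [Fintype Q.V] [Fintype Q.E] : Prop := IsTreeQuiv Q

/-!
For quadratic relations `(AP_m ∥ 𝒫)` consists of the parallel pairs `(ρ, γ)` with `|ρ| = m`, every
subpath of length two of `ρ` a relation and `γ ∈ 𝒫`, and the matrix of `F_{m+1}` records
`(ρ, γ) ↦ ± (ρ b, γ b) + (a ρ, a γ)`. By the string conditions a pair has at most one extension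
on each side; it has a right one exactly when `ρ, γ` end with different arrows and
`γ Q₁ ⊄ I` (symmetrically on the left), and extensions on the two sides commute. Undoing right
extensions, and left extensions of pairs admitting no right extension, is then a homotopy
between the identity and the projection onto the pairs of `⁻(0,0)⁻_n`, on which all
differentials vanish. These pairs therefore form a basis of `HH^n(A)`.

If `(ρ, γ) ∈ (0,1)_n`, stripping the common last arrow gives a pair `(ρ̂, γ̂)` with `γ̂` nontrivial,
since `Q` has no oriented cycles; for quadratic relations `Q₁ γ ⊆ I` and `Q₁ γ̂ ⊆ I` both only
depend on the first arrow of `γ`, so `⁺⁻(0,1)_n` is empty.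
-/

section Lists

variable {α : Type*} {r s : α → α → Prop} {l : List α} {a b : α}

theorem _root_.List.isChain_iff_forall_pair_infix : l.IsChain r ↔ ∀ a b, [a, b] <:+: l → r a b :=
  ⟨fun h _ _ hab => List.isChain_pair.1 (h.infix hab),
    fun h => (List.isChain_isInfix l).imp h⟩

theorem _root_.List.isChain_and_iff :
    l.IsChain (fun a b => r a b ∧ s a b) ↔ l.IsChain r ∧ l.IsChain s := by
  simp only [List.isChain_iff_forall_pair_infix, imp_and, forall_and]

theorem _root_.List.isChain_append_singleton_iff (h : l.getLast? = some a) :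
    (l ++ [b]).IsChain r ↔ l.IsChain r ∧ r a b := by
  simp [List.isChain_append, h]

theorem _root_.List.isChain_cons_iff_of_head? (h : l.head? = some b) :
    (a :: l).IsChain r ↔ r a b ∧ l.IsChain r := by
  simp [List.isChain_cons, h]

end Lists

section Homotopy

variable {K U V W M : Type*} [Ring K] [AddCommGroup U] [Module K U] [AddCommGroup V]
  [Module K V] [AddCommGroup W] [Module K W] [AddCommGroup M] [Module K M]

def cohomologyEquivOfHomotopy (d₁ : U →ₗ[K] V) (d₂ : V →ₗ[K] W) (π : V →ₗ[K] M)
    (σ : M →ₗ[K] V) (h₁ : V →ₗ[K] U) (h₂ : W →ₗ[K] V) (hπσ : ∀ m, π (σ m) = m)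
    (hd₂σ : ∀ m, d₂ (σ m) = 0) (hπd₁ : ∀ u, π (d₁ u) = 0)
    (hhom : ∀ v, h₂ (d₂ v) + d₁ (h₁ v) = v - σ (π v)) :
    (LinearMap.ker d₂ ⧸ (LinearMap.range d₁).comap (LinearMap.ker d₂).subtype) ≃ₗ[K] M :=
  let φ : LinearMap.ker d₂ →ₗ[K] M := π ∘ₗ (LinearMap.ker d₂).subtype
  have hsurj : Function.Surjective φ := fun m => ⟨⟨σ m, hd₂σ m⟩, hπσ m⟩
  have hker : LinearMap.ker φ = (LinearMap.range d₁).comap (LinearMap.ker d₂).subtype := by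
    ext ⟨v, hv⟩
    simp only [LinearMap.mem_ker, Submodule.mem_comap, Submodule.coe_subtype,
      LinearMap.mem_range]
    constructor
    · intro hπv
      refine ⟨h₁ v, ?_⟩
      have := hhom v
      rwa [LinearMap.mem_ker.1 hv, map_zero, zero_add, show π v = 0 from hπv, map_zero,
        sub_zero] at this
    · rintro ⟨u, rfl⟩
      exact hπd₁ u
  (Submodule.quotEquivOfEq _ _ hker.symm).trans (φ.quotKerEquivOfSurjective hsurj)

end Homotopy

section RelMatrix

open scoped Matrix

variable {ι κ μ 𝕜 : Type*} [Semiring 𝕜]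

def relMatrix (𝕜 : Type*) [Semiring 𝕜] (P : ι → κ → Prop) : Matrix ι κ 𝕜 :=
  Matrix.of fun i j => if P i j then 1 else 0

theorem relMatrix_transpose (P : ι → κ → Prop) :
    (relMatrix 𝕜 P)ᵀ = relMatrix 𝕜 fun j i => P i j := rfl

theorem relMatrix_mul_relMatrix [Fintype κ] {P : ι → κ → Prop} {P' : κ → μ → Prop}
    {T : ι → μ → Prop} (huniq : ∀ i j x x', P i x → P' x j → P i x' → P' x' j → x = x')
    (hT : ∀ i j, (∃ x, P i x ∧ P' x j) ↔ T i j) :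
    relMatrix 𝕜 P * relMatrix 𝕜 P' = relMatrix 𝕜 T := by
  ext i j
  simp only [Matrix.mul_apply, relMatrix, Matrix.of_apply, ite_zero_mul_ite_zero, mul_one,
    ← hT]
  split_ifs with h
  · obtain ⟨x, hx⟩ := h
    rw [Finset.sum_eq_single x (fun x' _ hx' => if_neg fun h' =>
      hx' (huniq i j x' x h'.1 h'.2 hx.1 hx.2)) (by simp), if_pos hx]
  · exact Finset.sum_eq_zero fun x _ => if_neg fun hx => h ⟨x, hx⟩

theorem relMatrix_mul_relMatrix_eq_zero [Fintype κ] {P : ι → κ → Prop} {P' : κ → μ → Prop}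
    (h : ∀ i j x, P i x → P' x j → False) : relMatrix 𝕜 P * relMatrix 𝕜 P' = 0 := by
  rw [relMatrix_mul_relMatrix (T := fun _ _ => False)
    (fun i j x _ hx hx' _ _ => (h i j x hx hx').elim) fun i j => by simpa using h i j]
  ext
  simp [relMatrix]

end RelMatrix

section Quadratic

variable {Q} {R : Set (List Q.E)}

theorem inI_iff_of_quadratic (hquad : ∀ r ∈ R, r.length = 2) {l : List Q.E} :
    inI Q R l ↔ ∃ a b, [a, b] ∈ R ∧ [a, b] <:+: l := by
  constructor
  · rintro ⟨r, hr, hrl⟩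
    obtain ⟨a, b, rfl⟩ := List.length_eq_two.1 (hquad r hr)
    exact ⟨a, b, hr, hrl⟩
  · rintro ⟨a, b, hab, habl⟩
    exact ⟨[a, b], hab, habl⟩

theorem not_inI_iff_isChain (hquad : ∀ r ∈ R, r.length = 2) {l : List Q.E} :
    ¬ inI Q R l ↔ l.IsChain (fun a b => [a, b] ∉ R) := by
  rw [inI_iff_of_quadratic hquad, List.isChain_iff_forall_pair_infix]
  grind

theorem isP_iff_of_quadratic (hquad : ∀ r ∈ R, r.length = 2) {γ : List Q.E} :
    isP Q R γ ↔ γ ≠ [] ∧ γ.IsChain (fun a b => Q.tgt a = Q.src b ∧ [a, b] ∉ R) := by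
  rw [isP, IsPathL, not_inI_iff_isChain hquad, List.isChain_and_iff, and_assoc]
  rfl

theorem StringData.tgt_eq_src (hs : StringData Q R) {a b : Q.E} (hab : [a, b] ∈ R) :
    Q.tgt a = Q.src b :=
  (List.isChain_pair (R := fun a b => Q.tgt a = Q.src b)).1 (hs.relPath _ hab).1.2

theorem slice_pair {w : List Q.E} {i : ℕ} (hi : i + 2 ≤ w.length) :
    slice Q w (i, i + 2) = [w[i], w[i + 1]] := by
  simp only [slice, show i + 2 - i = 2 by omega]
  rw [List.drop_eq_getElem_cons (by omega), List.drop_eq_getElem_cons (by omega)]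
  rfl

theorem snd_eq_of_mem_relIvs (hquad : ∀ r ∈ R, r.length = 2) {w : List Q.E} {c : Iv}
    (hc : c ∈ relIvs Q R w) : c.2 = c.1 + 2 := by
  obtain ⟨hlt, hle, hmem⟩ := hc
  have := hquad _ hmem
  simp only [slice, List.length_take, List.length_drop] at this
  omega

theorem IsConcat.mem {S : Set Iv} {n : ℕ} {p : ℕ → Iv} (hp : IsConcat S (n + 1) p) {i : ℕ}
    (hi : i ≤ n) : p i ∈ S := by
  rcases i with _ | i
  · exact hp.1
  · have h := (hp.2 (i + 1) (by omega) (by omega)).1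
    unfold cWindow at h
    split_ifs at h <;> exact h.1

theorem IsConcat.eq_of_quadratic (hquad : ∀ r ∈ R, r.length = 2) {w : List Q.E} {n : ℕ}
    {p : ℕ → Iv} (hp : IsConcat (relIvs Q R w) (n + 1) p) (h0 : (p 0).1 = 0) {i : ℕ}
    (hi : i ≤ n) : p i = (i, i + 2) := by
  suffices (p i).1 = i by
    rw [Prod.ext_iff, snd_eq_of_mem_relIvs hquad (hp.mem hi), this]
    exact ⟨rfl, rfl⟩
  induction i using Nat.strong_induction_on with
  | _ i ih =>
    have hsnd : ∀ j < i, (p j).2 = j + 2 := fun j hj => by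
      rw [snd_eq_of_mem_relIvs hquad (hp.mem (by omega)), ih j hj (by omega)]
    rcases i with _ | _ | j
    · exact h0
    · obtain ⟨-, h1, h2⟩ := (hp.2 1 le_rfl (by omega)).1
      have := hsnd 0 (by omega)
      show (p 1).1 = 1
      omega
    · have h := (hp.2 (j + 2) (by omega) (by omega)).1
      rw [cWindow, if_neg (by omega), show j + 2 - 2 = j by omega,
        show j + 2 - 1 = j + 1 by omega] at h
      obtain ⟨-, h1, h2⟩ := h
      have := hsnd j (by omega)
      have := hsnd (j + 1) (by omega)
      show (p (j + 2)).1 = j + 2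
      omega

theorem isAP_iff_of_quadratic (hs : StringData Q R) (hquad : ∀ r ∈ R, r.length = 2) {m : ℕ}
    (hm : 1 ≤ m) {w : List Q.E} :
    IsAP Q R m w ↔ w.length = m ∧ w.IsChain (fun a b => [a, b] ∈ R) := by
  have hpath : ∀ {w : List Q.E}, w ≠ [] → w.IsChain (fun a b => [a, b] ∈ R) → IsPathL Q w :=
    fun hw hc => ⟨hw, hc.imp fun _ _ => hs.tgt_eq_src⟩
  obtain ⟨n, rfl | rfl⟩ : ∃ n, m = 1 ∨ m = n + 2 := ⟨m - 2, by omega⟩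
  · refine ⟨fun ⟨_, hw⟩ => ⟨hw, ?_⟩, fun ⟨hw, hc⟩ => ⟨hpath (by grind) hc, hw⟩⟩
    obtain ⟨a, rfl⟩ := List.length_eq_one_iff.1 hw
    exact List.isChain_singleton a
  have hrel : ∀ i (hi : i + 2 ≤ w.length),
      (i, i + 2) ∈ relIvs Q R w ↔ [w[i], w[i + 1]] ∈ R := fun i hi => by
    simp [relIvs, slice_pair hi, hi]
  constructor
  · rintro ⟨-, p, hp, h0, hn⟩
    simp only at h0 hn
    have hlen : w.length = n + 2 := by rw [← hn, hp.eq_of_quadratic hquad h0 le_rfl]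
    refine ⟨hlen, List.isChain_iff_getElem.2 fun i hi => ?_⟩
    rw [← hrel i (by omega), ← hp.eq_of_quadratic hquad h0 (by omega)]
    exact hp.mem (by omega)
  · rintro ⟨hlen, hc⟩
    have hmem : ∀ i, i ≤ n → (i, i + 2) ∈ relIvs Q R w := fun i hi =>
      (hrel i (by omega)).2 (hc.getElem i (by omega))
    refine ⟨hpath (by grind) hc, fun i => (i, i + 2), ⟨hmem 0 (by omega), fun i hi hin => ?_⟩,
      rfl, hlen.symm⟩
    unfold cWindow
    split_ifs with h1
    · subst h1
      exact ⟨⟨hmem 1 (by omega), by simp, by simp⟩, fun q hq => hq.2.1⟩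
    · refine ⟨⟨hmem i (by omega), ?_, ?_⟩, fun q hq => ?_⟩
      · dsimp only
        omega
      · dsimp only
        omega
      · have := hq.2.1
        dsimp only at this ⊢
        omega

end Quadratic

section BasisPairs

variable {Q} {R : Set (List Q.E)}

/-- A pair `(ρ, γ)` of `(AP_m ∥ 𝒫)` for quadratic `R`, with its degree `m = |ρ|` forgotten. -/
structure IsBasisPair (R : Set (List Q.E)) (x : Pr Q) : Prop where
  fst_ne_nil : x.1 ≠ []
  fst_isChain : x.1.IsChain fun a b => [a, b] ∈ R
  snd_ne_nil : x.2 ≠ []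
  snd_isChain : x.2.IsChain fun a b => Q.tgt a = Q.src b ∧ [a, b] ∉ R
  psrc_eq : psrc Q x.1 = psrc Q x.2
  ptgt_eq : ptgt Q x.1 = ptgt Q x.2

theorem mem_pairSet_iff (hs : StringData Q R) (hquad : ∀ r ∈ R, r.length = 2) {m : ℕ}
    (hm : 1 ≤ m) {x : Pr Q} : x ∈ PairSet Q R m ↔ IsBasisPair R x ∧ x.1.length = m := by
  simp only [PairSet, Set.mem_ofPred_eq, isAP_iff_of_quadratic hs hquad hm,
    isP_iff_of_quadratic hquad]
  constructor
  · rintro ⟨⟨hlen, hρ⟩, ⟨hγ₀, hγ⟩, hsrc, htgt⟩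
    exact ⟨⟨by grind, hρ, hγ₀, hγ, hsrc, htgt⟩, hlen⟩
  · rintro ⟨⟨-, hρ, hγ₀, hγ, hsrc, htgt⟩, hlen⟩
    exact ⟨⟨hlen, hρ⟩, ⟨hγ₀, hγ⟩, hsrc, htgt⟩

theorem IsBasisPair.snd_isChain_not_mem {x : Pr Q} (hx : IsBasisPair R x) :
    x.2.IsChain fun a b => [a, b] ∉ R :=
  hx.snd_isChain.imp fun _ _ h => h.2

theorem inI_append_singleton_iff (hquad : ∀ r ∈ R, r.length = 2) {γ : List Q.E} {β : Q.E}
    (hγ : γ.IsChain fun a b => [a, b] ∉ R) (hβ : γ.getLast? = some β) (b : Q.E) :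
    inI Q R (γ ++ [b]) ↔ [β, b] ∈ R := by
  rw [← not_iff_not, not_inI_iff_isChain hquad, List.isChain_append_singleton_iff hβ]
  simp [hγ]

theorem inI_cons_iff (hquad : ∀ r ∈ R, r.length = 2) {γ : List Q.E} {β : Q.E}
    (hγ : γ.IsChain fun a b => [a, b] ∉ R) (hβ : γ.head? = some β) (a : Q.E) :
    inI Q R (a :: γ) ↔ [a, β] ∈ R := by
  rw [← not_iff_not, not_inI_iff_isChain hquad, List.isChain_cons_iff_of_head? hβ]
  simp [hγ]

theorem rightI_iff_of_getLast? (hquad : ∀ r ∈ R, r.length = 2) {γ : List Q.E} {β : Q.E}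
    (hγ : γ.IsChain fun a b => [a, b] ∉ R) (hβ : γ.getLast? = some β) :
    rightI Q R γ ↔ ∀ b, Q.src b = Q.tgt β → [β, b] ∈ R := by
  simp only [rightI, ptgt, hβ, Option.map_some, Option.some_inj,
    inI_append_singleton_iff hquad hγ hβ]

theorem leftI_iff_of_head? (hquad : ∀ r ∈ R, r.length = 2) {γ : List Q.E} {β : Q.E}
    (hγ : γ.IsChain fun a b => [a, b] ∉ R) (hβ : γ.head? = some β) :
    leftI Q R γ ↔ ∀ a, Q.tgt a = Q.src β → [a, β] ∈ R := by
  simp only [leftI, psrc, hβ, Option.map_some, Option.some_inj, inI_cons_iff hquad hγ hβ]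

end BasisPairs

section Extensions

variable {Q} {R : Set (List Q.E)}

theorem psrc_of_head? {l : List Q.E} {a : Q.E} (h : l.head? = some a) :
    psrc Q l = some (Q.src a) := by
  simp [psrc, h]

theorem ptgt_of_getLast? {l : List Q.E} {a : Q.E} (h : l.getLast? = some a) :
    ptgt Q l = some (Q.tgt a) := by
  simp [ptgt, h]

theorem psrc_append_singleton {l : List Q.E} (hl : l ≠ []) (b : Q.E) :
    psrc Q (l ++ [b]) = psrc Q l := by
  simp [psrc, List.head?_append_of_ne_nil l hl]

theorem ptgt_cons {l : List Q.E} (hl : l ≠ []) (a : Q.E) : ptgt Q (a :: l) = ptgt Q l := by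
  simp [ptgt, List.getLast?_cons_of_ne_nil hl]

def snocPair (x : Pr Q) (b : Q.E) : Pr Q := (x.1 ++ [b], x.2 ++ [b])

def consPair (a : Q.E) (x : Pr Q) : Pr Q := (a :: x.1, a :: x.2)

theorem consPair_snocPair (a b : Q.E) (x : Pr Q) :
    consPair a (snocPair x b) = snocPair (consPair a x) b := rfl

theorem eq_of_snocPair_eq {x y : Pr Q} {b b' : Q.E} (h : snocPair x b = snocPair y b') :
    x = y := by
  simp only [snocPair, Prod.mk.injEq, List.append_singleton_inj] at h
  exact Prod.ext h.1.1 h.2.1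

theorem eq_of_consPair_eq {x y : Pr Q} {a a' : Q.E} (h : consPair a x = consPair a' y) :
    x = y := by
  simp only [consPair, Prod.mk.injEq, List.cons.injEq] at h
  exact Prod.ext h.1.2 h.2.2

theorem sharesLast_snocPair (x : Pr Q) (b : Q.E) : sharesLast Q (snocPair x b) := by
  simp [sharesLast, snocPair]

theorem sharesFirst_consPair (a : Q.E) (x : Pr Q) : sharesFirst Q (consPair a x) := rfl

theorem sharesFirst_snocPair {x : Pr Q} (hx : IsBasisPair R x) (b : Q.E) :
    sharesFirst Q (snocPair x b) ↔ sharesFirst Q x := by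
  simp [sharesFirst, snocPair, List.head?_append_of_ne_nil _ hx.fst_ne_nil,
    List.head?_append_of_ne_nil _ hx.snd_ne_nil]

theorem sharesLast_consPair {x : Pr Q} (hx : IsBasisPair R x) (a : Q.E) :
    sharesLast Q (consPair a x) ↔ sharesLast Q x := by
  simp [sharesLast, consPair, List.getLast?_cons_of_ne_nil hx.fst_ne_nil,
    List.getLast?_cons_of_ne_nil hx.snd_ne_nil]

theorem IsBasisPair.exists_getLast? {x : Pr Q} (hx : IsBasisPair R x) :
    ∃ α β, x.1.getLast? = some α ∧ x.2.getLast? = some β ∧ Q.tgt α = Q.tgt β := by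
  refine ⟨_, _, List.getLast?_eq_some_getLast hx.fst_ne_nil,
    List.getLast?_eq_some_getLast hx.snd_ne_nil, ?_⟩
  simpa [ptgt_of_getLast? (List.getLast?_eq_some_getLast hx.fst_ne_nil),
    ptgt_of_getLast? (List.getLast?_eq_some_getLast hx.snd_ne_nil)] using hx.ptgt_eq

theorem IsBasisPair.exists_head? {x : Pr Q} (hx : IsBasisPair R x) :
    ∃ α β, x.1.head? = some α ∧ x.2.head? = some β ∧ Q.src α = Q.src β := by
  refine ⟨_, _, List.head?_eq_some_head hx.fst_ne_nil, List.head?_eq_some_head hx.snd_ne_nil,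
    ?_⟩
  simpa [psrc_of_head? (List.head?_eq_some_head hx.fst_ne_nil),
    psrc_of_head? (List.head?_eq_some_head hx.snd_ne_nil)] using hx.psrc_eq

theorem isBasisPair_snocPair_iff {x : Pr Q} (hx : IsBasisPair R x) {α β b : Q.E}
    (hα : x.1.getLast? = some α) (hβ : x.2.getLast? = some β) :
    IsBasisPair R (snocPair x b) ↔ [α, b] ∈ R ∧ Q.tgt β = Q.src b ∧ [β, b] ∉ R := by
  constructor
  · intro h
    exact ⟨((List.isChain_append_singleton_iff hα).1 h.fst_isChain).2,
      ((List.isChain_append_singleton_iff hβ).1 h.snd_isChain).2⟩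
  · rintro ⟨hαb, hβb⟩
    exact ⟨by simp [snocPair], (List.isChain_append_singleton_iff hα).2 ⟨hx.fst_isChain, hαb⟩,
      by simp [snocPair], (List.isChain_append_singleton_iff hβ).2 ⟨hx.snd_isChain, hβb⟩,
      by simpa [snocPair, psrc_append_singleton hx.fst_ne_nil,
        psrc_append_singleton hx.snd_ne_nil] using hx.psrc_eq,
      by simp [snocPair, ptgt]⟩

theorem isBasisPair_consPair_iff {x : Pr Q} (hx : IsBasisPair R x) {α β a : Q.E}
    (hα : x.1.head? = some α) (hβ : x.2.head? = some β) :
    IsBasisPair R (consPair a x) ↔ [a, α] ∈ R ∧ Q.tgt a = Q.src β ∧ [a, β] ∉ R := by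
  constructor
  · intro h
    exact ⟨((List.isChain_cons_iff_of_head? hα).1 h.fst_isChain).1,
      ((List.isChain_cons_iff_of_head? hβ).1 h.snd_isChain).1⟩
  · rintro ⟨haα, haβ⟩
    exact ⟨by simp [consPair], (List.isChain_cons_iff_of_head? hα).2 ⟨haα, hx.fst_isChain⟩,
      by simp [consPair], (List.isChain_cons_iff_of_head? hβ).2 ⟨haβ, hx.snd_isChain⟩,
      by simp [consPair, psrc],
      by simpa [consPair, ptgt_cons hx.fst_ne_nil, ptgt_cons hx.snd_ne_nil] using hx.ptgt_eq⟩

end Extensions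

section StringAlgebra

variable {Q} {R : Set (List Q.E)}

theorem exists_isBasisPair_snocPair_iff (hs : StringData Q R)
    (hquad : ∀ r ∈ R, r.length = 2) {y : Pr Q} (hy : IsBasisPair R y) :
    (∃ b, IsBasisPair R (snocPair y b)) ↔ ¬ sharesLast Q y ∧ ¬ rightI Q R y.2 := by
  obtain ⟨α, β, hα, hβ, hαβ⟩ := hy.exists_getLast?
  simp only [isBasisPair_snocPair_iff hy hα hβ, sharesLast, hα, hβ, Option.some_inj,
    rightI_iff_of_getLast? hquad hy.snd_isChain_not_mem hβ, not_forall]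
  constructor
  · rintro ⟨b, hαb, hβb, hβb'⟩
    exact ⟨by rintro rfl; exact hβb' hαb, b, hβb.symm, hβb'⟩
  · rintro ⟨hne, b, hb, hβb⟩
    refine ⟨b, ?_, hb.symm, hβb⟩
    by_contra hαb
    exact hne (hs.uniqLeft b α β (hαβ.trans hb.symm) hb.symm hαb hβb)

theorem exists_isBasisPair_consPair_iff (hs : StringData Q R)
    (hquad : ∀ r ∈ R, r.length = 2) {y : Pr Q} (hy : IsBasisPair R y) :
    (∃ a, IsBasisPair R (consPair a y)) ↔ ¬ sharesFirst Q y ∧ ¬ leftI Q R y.2 := by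
  obtain ⟨α, β, hα, hβ, hαβ⟩ := hy.exists_head?
  simp only [isBasisPair_consPair_iff hy hα hβ, sharesFirst, hα, hβ, Option.some_inj,
    leftI_iff_of_head? hquad hy.snd_isChain_not_mem hβ, not_forall]
  constructor
  · rintro ⟨a, haα, haβ, haβ'⟩
    exact ⟨by rintro rfl; exact haβ' haα, a, haβ, haβ'⟩
  · rintro ⟨hne, a, ha, haβ⟩
    refine ⟨a, ?_, ha, haβ⟩
    by_contra haα
    exact hne (hs.uniqRight a α β (ha.trans hαβ.symm) ha haα haβ)

theorem eq_of_isBasisPair_snocPair (hs : StringData Q R) {y : Pr Q} (hy : IsBasisPair R y)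
    {b b' : Q.E} (hb : IsBasisPair R (snocPair y b)) (hb' : IsBasisPair R (snocPair y b')) :
    b = b' := by
  obtain ⟨α, β, hα, hβ, -⟩ := hy.exists_getLast?
  obtain ⟨-, h₁, h₂⟩ := (isBasisPair_snocPair_iff hy hα hβ).1 hb
  obtain ⟨-, h₁', h₂'⟩ := (isBasisPair_snocPair_iff hy hα hβ).1 hb'
  exact hs.uniqRight β b b' h₁ h₁' h₂ h₂'

theorem eq_of_isBasisPair_consPair (hs : StringData Q R) {y : Pr Q} (hy : IsBasisPair R y)
    {a a' : Q.E} (ha : IsBasisPair R (consPair a y)) (ha' : IsBasisPair R (consPair a' y)) :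
    a = a' := by
  obtain ⟨α, β, hα, hβ, -⟩ := hy.exists_head?
  obtain ⟨-, h₁, h₂⟩ := (isBasisPair_consPair_iff hy hα hβ).1 ha
  obtain ⟨-, h₁', h₂'⟩ := (isBasisPair_consPair_iff hy hα hβ).1 ha'
  exact hs.uniqLeft β a a' h₁ h₁' h₂ h₂'

theorem IsBasisPair.exists_eq_snocPair (hs : StringData Q R) {x : Pr Q}
    (hx : IsBasisPair R x) (hsl : sharesLast Q x) (hlen : 2 ≤ x.1.length) :
    ∃ y b, IsBasisPair R y ∧ x = snocPair y b := by
  obtain ⟨α, β, hα, hβ, -⟩ := hx.exists_getLast?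
  obtain rfl : α = β := by simpa [sharesLast, hα, hβ] using hsl
  obtain ⟨⟨ρ, γ⟩, rfl⟩ : ∃ y, x = snocPair y α := by
    obtain ⟨ρ, hρ⟩ := List.getLast?_eq_some_iff.1 hα
    obtain ⟨γ, hγ⟩ := List.getLast?_eq_some_iff.1 hβ
    exact ⟨(ρ, γ), Prod.ext hρ hγ⟩
  have hρ : ρ ≠ [] := by rintro rfl; simp [snocPair] at hlen
  obtain ⟨hρc, hδα⟩ := (List.isChain_append_singleton_iff
    (List.getLast?_eq_some_getLast hρ)).1 hx.fst_isChain
  have hδα' := hs.tgt_eq_src hδα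
  have hγ : γ ≠ [] := by
    rintro rfl
    refine hs.triangular ρ ⟨hρ, hρc.imp fun _ _ => hs.tgt_eq_src⟩ ?_
    have := hx.psrc_eq
    simp only [snocPair, psrc_append_singleton hρ] at this
    rw [this, ptgt_of_getLast? (List.getLast?_eq_some_getLast hρ), hδα']
    rfl
  obtain ⟨hγc, hεα, -⟩ := (List.isChain_append_singleton_iff
    (List.getLast?_eq_some_getLast hγ)).1 hx.snd_isChain
  refine ⟨(ρ, γ), α, ⟨hρ, hρc, hγ, hγc, ?_, ?_⟩, rfl⟩
  · simpa [snocPair, psrc_append_singleton hρ, psrc_append_singleton hγ] using hx.psrc_eq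
  · simp only [ptgt_of_getLast? (List.getLast?_eq_some_getLast hρ),
      ptgt_of_getLast? (List.getLast?_eq_some_getLast hγ), hδα', hεα]

theorem IsBasisPair.exists_eq_consPair (hs : StringData Q R) {x : Pr Q}
    (hx : IsBasisPair R x) (hsf : sharesFirst Q x) (hlen : 2 ≤ x.1.length) :
    ∃ a y, IsBasisPair R y ∧ x = consPair a y := by
  obtain ⟨α, β, hα, hβ, -⟩ := hx.exists_head?
  obtain rfl : α = β := by simpa [sharesFirst, hα, hβ] using hsf
  obtain ⟨⟨ρ, γ⟩, rfl⟩ : ∃ y, x = consPair α y := by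
    obtain ⟨ρ, hρ⟩ := List.head?_eq_some_iff.1 hα
    obtain ⟨γ, hγ⟩ := List.head?_eq_some_iff.1 hβ
    exact ⟨(ρ, γ), Prod.ext hρ hγ⟩
  have hρ : ρ ≠ [] := by rintro rfl; simp [consPair] at hlen
  obtain ⟨hαδ, hρc⟩ := (List.isChain_cons_iff_of_head?
    (List.head?_eq_some_head hρ)).1 hx.fst_isChain
  have hαδ' := hs.tgt_eq_src hαδ
  have hγ : γ ≠ [] := by
    rintro rfl
    refine hs.triangular ρ ⟨hρ, hρc.imp fun _ _ => hs.tgt_eq_src⟩ ?_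
    have := hx.ptgt_eq
    simp only [consPair, ptgt_cons hρ] at this
    rw [this, psrc_of_head? (List.head?_eq_some_head hρ), ← hαδ']
    rfl
  obtain ⟨⟨hαε, -⟩, hγc⟩ := (List.isChain_cons_iff_of_head?
    (List.head?_eq_some_head hγ)).1 hx.snd_isChain
  refine ⟨α, (ρ, γ), ⟨hρ, hρc, hγ, hγc, ?_, ?_⟩, rfl⟩
  · simp only [psrc_of_head? (List.head?_eq_some_head hρ),
      psrc_of_head? (List.head?_eq_some_head hγ), ← hαδ', hαε]
  · simpa [consPair, ptgt_cons hρ, ptgt_cons hγ] using hx.ptgt_eq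

theorem leftI_snd_snocPair_iff (hquad : ∀ r ∈ R, r.length = 2) {y : Pr Q} {b : Q.E}
    (hy : IsBasisPair R y) (hyb : IsBasisPair R (snocPair y b)) :
    leftI Q R (snocPair y b).2 ↔ leftI Q R y.2 := by
  obtain ⟨-, β, -, hβ, -⟩ := hy.exists_head?
  rw [leftI_iff_of_head? hquad hy.snd_isChain_not_mem hβ, leftI_iff_of_head? hquad
    hyb.snd_isChain_not_mem (by simpa [snocPair, List.head?_append_of_ne_nil _ hy.snd_ne_nil])]

theorem rightI_snd_consPair_iff (hquad : ∀ r ∈ R, r.length = 2) {y : Pr Q} {a : Q.E}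
    (hy : IsBasisPair R y) (hya : IsBasisPair R (consPair a y)) :
    rightI Q R (consPair a y).2 ↔ rightI Q R y.2 := by
  obtain ⟨-, β, -, hβ, -⟩ := hy.exists_getLast?
  rw [rightI_iff_of_getLast? hquad hy.snd_isChain_not_mem hβ, rightI_iff_of_getLast? hquad
    hya.snd_isChain_not_mem (by simpa [consPair, List.getLast?_cons_of_ne_nil hy.snd_ne_nil])]

theorem isBasisPair_consPair_snocPair {w : Pr Q} {a b : Q.E} (hw : IsBasisPair R w)
    (ha : IsBasisPair R (consPair a w)) (hb : IsBasisPair R (snocPair w b)) :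
    IsBasisPair R (consPair a (snocPair w b)) := by
  obtain ⟨α, β, hα, hβ, -⟩ := hw.exists_head?
  refine (isBasisPair_consPair_iff hb ?_ ?_).2 ((isBasisPair_consPair_iff hw hα hβ).1 ha)
  · simpa [snocPair, List.head?_append_of_ne_nil _ hw.fst_ne_nil]
  · simpa [snocPair, List.head?_append_of_ne_nil _ hw.snd_ne_nil]

theorem leftIHat_snd_snocPair_iff {y : Pr Q} (hy : y.2 ≠ []) (b : Q.E) :
    leftIHat Q R (snocPair y b).2 ↔ leftI Q R y.2 := by
  simp [leftIHat, leftI, snocPair, psrc_append_singleton hy]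

theorem pm01_eq_empty (hs : StringData Q R) (hquad : ∀ r ∈ R, r.length = 2) {n : ℕ}
    (hn : 2 ≤ n) : pm01 Q R n = ∅ := by
  refine Set.eq_empty_of_forall_notMem fun x ⟨⟨hx, _, hsl⟩, hli, hnot⟩ => hnot ?_
  obtain ⟨hxB, hlen⟩ := (mem_pairSet_iff hs hquad (by omega)).1 hx
  obtain ⟨y, b, hy, rfl⟩ := hxB.exists_eq_snocPair hs hsl (by omega)
  rwa [leftIHat_snd_snocPair_iff hy.snd_ne_nil, ← leftI_snd_snocPair_iff hquad hy hxB]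

end StringAlgebra

section Coefficients

variable {Q} {R : Set (List Q.E)} {k}

theorem coeffF_cond_snoc_iff {x y : Pr Q} (hx : x.1.length = y.1.length + 1) :
    (y.1 = slice Q x.1 (0, y.1.length) ∧ x.2 = x.1.take 0 ++ y.2 ++ x.1.drop y.1.length) ↔
      ∃ b, x = snocPair y b := by
  obtain ⟨ρ, γ⟩ := x
  obtain ⟨y₁, y₂⟩ := y
  obtain ⟨ρ, b, rfl⟩ := (List.eq_nil_or_concat' ρ).resolve_left (by rintro rfl; simp at hx)
  simp only [List.length_append, List.length_singleton, Nat.add_right_cancel_iff] at hx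
  simp [slice, snocPair, ← hx, eq_comm]

theorem coeffF_cond_cons_iff {x y : Pr Q} (hx : x.1 ≠ []) :
    (y.1 = slice Q x.1 (1, x.1.length) ∧ x.2 = x.1.take 1 ++ y.2 ++ x.1.drop x.1.length) ↔
      ∃ a, x = consPair a y := by
  obtain ⟨ρ, γ⟩ := x
  obtain ⟨y₁, y₂⟩ := y
  obtain _ | ⟨a, ρ⟩ := ρ
  · exact absurd rfl hx
  simp [slice, consPair, eq_comm]

theorem coeffF_eq {n : ℕ} (hn : 2 ≤ n) {x y : Pr Q} (hx : x.1.length = n)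
    (hy : y.1.length = n - 1) :
    coeffF Q k R n y x =
      (if ∃ b, x = snocPair y b then (-1 : k) ^ n else 0) +
        (if ∃ a, x = consPair a y then 1 else 0) := by
  have hsupp : (Function.support fun c : Iv =>
      if c.1 < c.2 ∧ c.2 ≤ x.1.length ∧ ¬(c.1 = 0 ∧ c.2 = x.1.length) ∧
          y.1 = slice Q x.1 c ∧ x.2 = x.1.take c.1 ++ y.2 ++ x.1.drop c.2 then
        (if c.1 = 0 then (-1 : k) ^ n else 1) else 0) ⊆ ({(0, n - 1), (1, n)} : Finset Iv) := by
    intro c hc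
    rw [Function.mem_support, ne_eq, ite_eq_right_iff, Classical.not_imp] at hc
    obtain ⟨⟨h₁, h₂, h₃, h₄, -⟩, -⟩ := hc
    have hlen : y.1.length = min (c.2 - c.1) (x.1.length - c.1) := by
      rw [h₄, slice, List.length_take, List.length_drop]
    have : c = (0, n - 1) ∨ c = (1, n) := by
      obtain ⟨c₁, c₂⟩ := c
      dsimp only at h₁ h₂ h₃ hlen
      simp only [Prod.mk.injEq]
      omega
    simpa using this
  rw [coeffF, finsum_eq_sum_of_support_subset _ hsupp, Finset.sum_pair (by simp)]
  congr 1
  · simp only [show 0 < n - 1 by omega, hx, show n - 1 ≤ n by omega, true_and,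
      show n - 1 ≠ n by omega, and_false, not_false_eq_true, if_true]
    rw [← hy]
    simp only [coeffF_cond_snoc_iff (show x.1.length = y.1.length + 1 by omega)]
  · simp only [show 1 < n by omega, hx, le_refl, one_ne_zero, false_and,
      not_false_eq_true, true_and, if_false]
    rw [← hx]
    simp only [coeffF_cond_cons_iff (show x.1 ≠ [] by rintro h; simp [h] at hx; omega)]

end Coefficients

section Complex

open scoped Matrix

variable {Q} {R : Set (List Q.E)}

theorem IsBasisPair.of_mem (hs : StringData Q R) (hquad : ∀ r ∈ R, r.length = 2) {m : ℕ}
    (hm : 1 ≤ m) {x : Pr Q} (hx : x ∈ PairSet Q R m) : IsBasisPair R x :=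
  ((mem_pairSet_iff hs hquad hm).1 hx).1

theorem length_val_of_mem (hs : StringData Q R) (hquad : ∀ r ∈ R, r.length = 2) {m : ℕ}
    (hm : 1 ≤ m) (x : ↥(PairSet Q R m)) : x.1.1.length = m :=
  ((mem_pairSet_iff hs hquad hm).1 x.2).2

theorem mem_mm00_iff {n : ℕ} {x : Pr Q} (hx : x ∈ PairSet Q R n) :
    x ∈ mm00 Q R n ↔
      ¬ sharesFirst Q x ∧ ¬ sharesLast Q x ∧ leftI Q R x.2 ∧ rightI Q R x.2 := by
  simp [mm00, cls00, hx, and_assoc]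

theorem snocPair_mem_pairSet_iff (hs : StringData Q R) (hquad : ∀ r ∈ R, r.length = 2)
    {m : ℕ} (hm : 1 ≤ m) {w : Pr Q} (hw : IsBasisPair R w) (b : Q.E) :
    snocPair w b ∈ PairSet Q R (m + 1) ↔ w ∈ PairSet Q R m ∧ IsBasisPair R (snocPair w b) := by
  simp [mem_pairSet_iff hs hquad hm, mem_pairSet_iff hs hquad (Nat.le_add_left 1 m), snocPair,
    hw, and_comm]

theorem consPair_mem_pairSet_iff (hs : StringData Q R) (hquad : ∀ r ∈ R, r.length = 2)
    {m : ℕ} (hm : 1 ≤ m) {w : Pr Q} (hw : IsBasisPair R w) (a : Q.E) :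
    consPair a w ∈ PairSet Q R (m + 1) ↔ w ∈ PairSet Q R m ∧ IsBasisPair R (consPair a w) := by
  simp [mem_pairSet_iff hs hquad hm, mem_pairSet_iff hs hquad (Nat.le_add_left 1 m), consPair,
    hw, and_comm]

variable (Q R) in
def snocMatrix (m : ℕ) : Matrix ↥(PairSet Q R m) ↥(PairSet Q R (m + 1)) k :=
  relMatrix k fun w x => ∃ b, x.1 = snocPair w.1 b

variable (Q R) in
def consMatrix (m : ℕ) : Matrix ↥(PairSet Q R m) ↥(PairSet Q R (m + 1)) k :=
  relMatrix k fun w x => ∃ a, x.1 = consPair a w.1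

variable (Q R) in
/-- Left extensions of the pairs which are neither right extensions nor right extendable. -/
def rigidConsMatrix (m : ℕ) : Matrix ↥(PairSet Q R m) ↥(PairSet Q R (m + 1)) k :=
  relMatrix k fun w x => (¬ sharesLast Q w.1 ∧ rightI Q R w.1.2) ∧ ∃ a, x.1 = consPair a w.1

variable [∀ j, Fintype ↥(PairSet Q R j)] {k}

theorem snocMatrix_mul_transpose (hs : StringData Q R) (hquad : ∀ r ∈ R, r.length = 2)
    {m : ℕ} (hm : 1 ≤ m) :
    snocMatrix Q k R m * (snocMatrix Q k R m)ᵀ =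
      relMatrix k fun u y => u = y ∧ ¬ sharesLast Q y.1 ∧ ¬ rightI Q R y.1.2 := by
  have hB₀ (x : ↥(PairSet Q R m)) := IsBasisPair.of_mem hs hquad hm x.2
  have hB₁ (x : ↥(PairSet Q R (m + 1))) := IsBasisPair.of_mem hs hquad (by omega) x.2
  refine relMatrix_mul_relMatrix ?_ fun u y => ⟨?_, ?_⟩
  · rintro u - x x' ⟨b, hb⟩ - ⟨b', hb'⟩ -
    have := eq_of_isBasisPair_snocPair hs (hB₀ u) (hb ▸ hB₁ x) (hb' ▸ hB₁ x')
    exact Subtype.ext (by rw [hb, hb', this])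
  · rintro ⟨x, ⟨b, hb⟩, ⟨b', hb'⟩⟩
    exact ⟨Subtype.ext (eq_of_snocPair_eq (hb.symm.trans hb')),
      (exists_isBasisPair_snocPair_iff hs hquad (hB₀ y)).1 ⟨b', hb' ▸ hB₁ x⟩⟩
  · rintro ⟨rfl, h⟩
    obtain ⟨b, hb⟩ := (exists_isBasisPair_snocPair_iff hs hquad (hB₀ u)).2 h
    exact ⟨⟨_, (snocPair_mem_pairSet_iff hs hquad hm (hB₀ u) b).2 ⟨u.2, hb⟩⟩, ⟨b, rfl⟩, b, rfl⟩

theorem rigidConsMatrix_mul_snocMatrix_transpose (hs : StringData Q R)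
    (hquad : ∀ r ∈ R, r.length = 2) {m : ℕ} (hm : 1 ≤ m) :
    rigidConsMatrix Q k R m * (snocMatrix Q k R m)ᵀ = 0 := by
  refine relMatrix_mul_relMatrix_eq_zero fun u y x ⟨⟨hnsl, _⟩, a, ha⟩ ⟨b, hb⟩ => hnsl ?_
  have : sharesLast Q x.1 := hb ▸ sharesLast_snocPair _ _
  rwa [ha, sharesLast_consPair (IsBasisPair.of_mem hs hquad hm u.2)] at this

theorem rigidConsMatrix_mul_consMatrix_transpose (hs : StringData Q R)
    (hquad : ∀ r ∈ R, r.length = 2) {m : ℕ} (hm : 1 ≤ m) :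
    rigidConsMatrix Q k R m * (consMatrix Q k R m)ᵀ =
      relMatrix k fun u y => u = y ∧ (¬ sharesLast Q y.1 ∧ rightI Q R y.1.2) ∧
        ¬ sharesFirst Q y.1 ∧ ¬ leftI Q R y.1.2 := by
  have hB₀ (x : ↥(PairSet Q R m)) := IsBasisPair.of_mem hs hquad hm x.2
  have hB₁ (x : ↥(PairSet Q R (m + 1))) := IsBasisPair.of_mem hs hquad (by omega) x.2
  refine relMatrix_mul_relMatrix ?_ fun u y => ⟨?_, ?_⟩
  · rintro u - x x' ⟨-, a, ha⟩ - ⟨-, a', ha'⟩ -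
    have := eq_of_isBasisPair_consPair hs (hB₀ u) (ha ▸ hB₁ x) (ha' ▸ hB₁ x')
    exact Subtype.ext (by rw [ha, ha', this])
  · rintro ⟨x, ⟨hN, a, ha⟩, a', ha'⟩
    obtain rfl := Subtype.ext (eq_of_consPair_eq (ha.symm.trans ha'))
    exact ⟨rfl, hN, (exists_isBasisPair_consPair_iff hs hquad (hB₀ u)).1 ⟨a, ha ▸ hB₁ x⟩⟩
  · rintro ⟨rfl, hN, h⟩
    obtain ⟨a, ha⟩ := (exists_isBasisPair_consPair_iff hs hquad (hB₀ u)).2 h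
    exact ⟨⟨_, (consPair_mem_pairSet_iff hs hquad hm (hB₀ u) a).2 ⟨u.2, ha⟩⟩, ⟨hN, a, rfl⟩, a,
      rfl⟩

theorem snocMatrix_transpose_mul (hs : StringData Q R) (hquad : ∀ r ∈ R, r.length = 2)
    {m : ℕ} (hm : 1 ≤ m) :
    (snocMatrix Q k R m)ᵀ * snocMatrix Q k R m =
      relMatrix k fun u y => u = y ∧ sharesLast Q y.1 := by
  have hB₀ (x : ↥(PairSet Q R m)) := IsBasisPair.of_mem hs hquad hm x.2
  have hB₁ (x : ↥(PairSet Q R (m + 1))) := IsBasisPair.of_mem hs hquad (by omega) x.2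
  refine relMatrix_mul_relMatrix ?_ fun u y => ⟨?_, ?_⟩
  · rintro u - w w' ⟨b, hb⟩ - ⟨b', hb'⟩ -
    exact Subtype.ext (eq_of_snocPair_eq (hb.symm.trans hb'))
  · rintro ⟨w, ⟨b, hb⟩, ⟨b', hb'⟩⟩
    obtain rfl := eq_of_isBasisPair_snocPair hs (hB₀ w) (hb ▸ hB₁ u) (hb' ▸ hB₁ y)
    exact ⟨Subtype.ext (hb.trans hb'.symm), hb' ▸ sharesLast_snocPair _ _⟩
  · rintro ⟨rfl, hsl⟩
    obtain ⟨w, b, hw, hwb⟩ := (hB₁ u).exists_eq_snocPair hs hsl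
      (by rw [length_val_of_mem hs hquad (by omega) u]; omega)
    have hmem := ((snocPair_mem_pairSet_iff hs hquad hm hw b).1 (hwb ▸ u.2)).1
    exact ⟨⟨w, hmem⟩, ⟨b, hwb⟩, b, hwb⟩

theorem snocMatrix_transpose_mul_rigidConsMatrix (hs : StringData Q R)
    (hquad : ∀ r ∈ R, r.length = 2) {m : ℕ} (hm : 1 ≤ m) :
    (snocMatrix Q k R m)ᵀ * rigidConsMatrix Q k R m = 0 := by
  refine relMatrix_mul_relMatrix_eq_zero fun u y w ⟨b, hb⟩ ⟨⟨_, hri⟩, _⟩ => ?_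
  exact ((exists_isBasisPair_snocPair_iff hs hquad (IsBasisPair.of_mem hs hquad hm w.2)).1
    ⟨b, hb ▸ IsBasisPair.of_mem hs hquad (by omega) u.2⟩).2 hri

theorem consMatrix_transpose_mul_rigidConsMatrix (hs : StringData Q R)
    (hquad : ∀ r ∈ R, r.length = 2) {m : ℕ} (hm : 1 ≤ m) :
    (consMatrix Q k R m)ᵀ * rigidConsMatrix Q k R m =
      relMatrix k fun u y => u = y ∧ sharesFirst Q y.1 ∧
        (¬ sharesLast Q y.1 ∧ rightI Q R y.1.2) := by
  have hB₀ (x : ↥(PairSet Q R m)) := IsBasisPair.of_mem hs hquad hm x.2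
  have hB₁ (x : ↥(PairSet Q R (m + 1))) := IsBasisPair.of_mem hs hquad (by omega) x.2
  have hN {w : Pr Q} (hw : IsBasisPair R w) {a : Q.E} (hwa : IsBasisPair R (consPair a w)) :
      (¬ sharesLast Q (consPair a w) ∧ rightI Q R (consPair a w).2) ↔
        (¬ sharesLast Q w ∧ rightI Q R w.2) := by
    rw [sharesLast_consPair hw, rightI_snd_consPair_iff hquad hw hwa]
  refine relMatrix_mul_relMatrix ?_ fun u y => ⟨?_, ?_⟩
  · rintro u - w w' ⟨a, ha⟩ - ⟨a', ha'⟩ -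
    exact Subtype.ext (eq_of_consPair_eq (ha.symm.trans ha'))
  · rintro ⟨w, ⟨a, ha⟩, hNw, a', ha'⟩
    obtain rfl := eq_of_isBasisPair_consPair hs (hB₀ w) (ha ▸ hB₁ u) (ha' ▸ hB₁ y)
    obtain rfl : u = y := Subtype.ext (ha.trans ha'.symm)
    exact ⟨rfl, ha ▸ sharesFirst_consPair _ _, ha ▸ (hN (hB₀ w) (ha ▸ hB₁ u)).2 hNw⟩
  · rintro ⟨rfl, hsf, hNu⟩
    obtain ⟨a, w, hw, hwa⟩ := (hB₁ u).exists_eq_consPair hs hsf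
      (by rw [length_val_of_mem hs hquad (by omega) u]; omega)
    have hmem := ((consPair_mem_pairSet_iff hs hquad hm hw a).1 (hwa ▸ u.2)).1
    exact ⟨⟨w, hmem⟩, ⟨a, hwa⟩, (hN hw (hwa ▸ hB₁ u)).1 (hwa ▸ hNu), a, hwa⟩

/-- Both sides count the squares `w ⟶ (a w, w b) ⟶ a w b`. -/
theorem snocMatrix_mul_consMatrix_transpose (hs : StringData Q R)
    (hquad : ∀ r ∈ R, r.length = 2) {m : ℕ} (hm : 1 ≤ m) :
    snocMatrix Q k R (m + 1) * (consMatrix Q k R (m + 1))ᵀ =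
      (consMatrix Q k R m)ᵀ * snocMatrix Q k R m := by
  have hB₀ (x : ↥(PairSet Q R m)) := IsBasisPair.of_mem hs hquad hm x.2
  have hB₁ (x : ↥(PairSet Q R (m + 1))) := IsBasisPair.of_mem hs hquad (by omega) x.2
  refine (relMatrix_mul_relMatrix (T := fun u y => ∃ w : ↥(PairSet Q R m),
      (∃ a, u.1 = consPair a w.1) ∧ ∃ b, y.1 = snocPair w.1 b) ?_ fun u y => ⟨?_, ?_⟩).trans
    (relMatrix_mul_relMatrix (fun _ _ w w' ⟨_, ha⟩ _ ⟨_, ha'⟩ _ =>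
      Subtype.ext (eq_of_consPair_eq (ha.symm.trans ha'))) fun _ _ => Iff.rfl).symm
  · rintro u - x x' ⟨b, hb⟩ - ⟨b', hb'⟩ -
    have := eq_of_isBasisPair_snocPair hs (hB₁ u)
      (hb ▸ IsBasisPair.of_mem hs hquad (by omega) x.2)
      (hb' ▸ IsBasisPair.of_mem hs hquad (by omega) x'.2)
    exact Subtype.ext (by rw [hb, hb', this])
  · rintro ⟨x, ⟨b, hb⟩, ⟨a, ha⟩⟩
    have hsf : sharesFirst Q u.1 := by
      rw [← sharesFirst_snocPair (hB₁ u) b, ← hb, ha]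
      exact sharesFirst_consPair _ _
    obtain ⟨a', w, hw, hwa⟩ := (hB₁ u).exists_eq_consPair hs hsf
      (by rw [length_val_of_mem hs hquad (by omega) u]; omega)
    have hmem := ((consPair_mem_pairSet_iff hs hquad hm hw a').1 (hwa ▸ u.2)).1
    refine ⟨⟨w, hmem⟩, ⟨a', hwa⟩, b, eq_of_consPair_eq (a := a) (a' := a') ?_⟩
    rw [← ha, hb, hwa, consPair_snocPair]
  · rintro ⟨w, ⟨a, ha⟩, ⟨b, hb⟩⟩
    have hx := isBasisPair_consPair_snocPair (hB₀ w) (ha ▸ hB₁ u) (hb ▸ hB₁ y)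
    have hmem := (consPair_mem_pairSet_iff hs hquad (by omega) (hb ▸ hB₁ y) a).2
      ⟨hb ▸ y.2, hx⟩
    refine ⟨⟨_, hmem⟩, ⟨b, ?_⟩, a, ?_⟩
    · change consPair a (snocPair w.1 b) = snocPair u.1 b
      rw [ha, consPair_snocPair]
    · change consPair a (snocPair w.1 b) = consPair a y.1
      rw [hb]

variable (Q k R) in
def coeffMatrix (m : ℕ) : Matrix ↥(PairSet Q R (m + 1)) ↥(PairSet Q R m) k :=
  (-1 : k) ^ (m + 1) • (snocMatrix Q k R m)ᵀ + (consMatrix Q k R m)ᵀ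

theorem F_succ_eq (hs : StringData Q R) (hquad : ∀ r ∈ R, r.length = 2) {m : ℕ}
    (hm : 1 ≤ m) : F Q k R (m + 1) = Matrix.mulVecLin (coeffMatrix Q k R m) := by
  refine congrArg Matrix.mulVecLin (Matrix.ext fun x y => ?_)
  rw [Matrix.of_apply, coeffF_eq (by omega) (length_val_of_mem hs hquad (by omega) x)
    (length_val_of_mem hs hquad hm y)]
  simp [coeffMatrix, snocMatrix, consMatrix, relMatrix]

variable (Q k R) in
def homotopyMatrix (m : ℕ) : Matrix ↥(PairSet Q R m) ↥(PairSet Q R (m + 1)) k :=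
  (-1 : k) ^ (m + 1) • snocMatrix Q k R m + rigidConsMatrix Q k R m

theorem homotopyMatrix_mul_add_mul_homotopyMatrix (hs : StringData Q R)
    (hquad : ∀ r ∈ R, r.length = 2) {m : ℕ} (hm : 1 ≤ m) :
    homotopyMatrix Q k R (m + 1) * coeffMatrix Q k R (m + 1) +
      coeffMatrix Q k R m * homotopyMatrix Q k R m =
      1 - relMatrix k fun u y => u = y ∧ y.1 ∈ mm00 Q R (m + 1) := by
  have hsign : (-1 : k) ^ (m + 1) * (-1) ^ (m + 1) = 1 := by
    rw [← pow_add, ← two_mul, pow_mul, neg_one_sq, one_pow]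
  simp only [homotopyMatrix, coeffMatrix, Matrix.add_mul, Matrix.mul_add, Matrix.smul_mul,
    Matrix.mul_smul,    snocMatrix_mul_transpose hs hquad (Nat.le_succ_of_le hm),
    rigidConsMatrix_mul_snocMatrix_transpose hs hquad (Nat.le_succ_of_le hm),
    rigidConsMatrix_mul_consMatrix_transpose hs hquad (Nat.le_succ_of_le hm),
    snocMatrix_mul_consMatrix_transpose hs hquad hm, snocMatrix_transpose_mul hs hquad hm,
    snocMatrix_transpose_mul_rigidConsMatrix hs hquad hm,
    consMatrix_transpose_mul_rigidConsMatrix hs hquad hm, smul_zero, add_zero, pow_succ _ (m + 1)]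
  ext u y
  simp only [Matrix.add_apply, Matrix.smul_apply, Matrix.sub_apply, Matrix.one_apply,
    Matrix.zero_apply, smul_eq_mul]
  generalize ((consMatrix Q k R m)ᵀ * snocMatrix Q k R m) u y = X
  generalize (-1 : k) ^ (m + 1) = τ at hsign ⊢
  rw [show ∀ z, τ * -1 * (τ * -1 * z) = z from fun z => by linear_combination z * hsign,
    show ∀ z w, τ * (τ * z + w) = z + τ * w from fun z w => by linear_combination z * hsign]
  simp only [relMatrix, Matrix.of_apply, mem_mm00_iff y.2]
  split_ifs <;> first | ring1 | (exfalso; tauto)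

variable (Q R) in
abbrev Mm00 (n : ℕ) : Type := {u : ↥(PairSet Q R n) // u.1 ∈ mm00 Q R n}

variable (Q k R) in
def mm00Matrix (n : ℕ) : Matrix ↥(PairSet Q R n) (Mm00 Q R n) k :=
  relMatrix k fun u s => u = s.1

theorem mm00Matrix_transpose_mul (n : ℕ) : (mm00Matrix Q k R n)ᵀ * mm00Matrix Q k R n = 1 := by
  rw [mm00Matrix, relMatrix_transpose, relMatrix_mul_relMatrix (T := fun s s' => s = s')
    (by grind) fun s s' => ⟨fun ⟨_, h₁, h₂⟩ => Subtype.ext (h₁.symm.trans h₂),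
      fun h => ⟨s.1, rfl, h ▸ rfl⟩⟩]
  ext
  simp [relMatrix, Matrix.one_apply]

theorem mm00Matrix_mul_transpose (n : ℕ) :
    mm00Matrix Q k R n * (mm00Matrix Q k R n)ᵀ =
      relMatrix k fun u y => u = y ∧ y.1 ∈ mm00 Q R n :=
  relMatrix_mul_relMatrix (by grind) fun u y =>
    ⟨fun ⟨s, h₁, h₂⟩ => ⟨h₁.trans h₂.symm, h₂ ▸ s.2⟩, fun ⟨h, hy⟩ => ⟨⟨y, hy⟩, h, rfl⟩⟩

theorem mm00Matrix_transpose_mul_coeffMatrix (m : ℕ) :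
    (mm00Matrix Q k R (m + 1))ᵀ * coeffMatrix Q k R m = 0 := by
  rw [coeffMatrix, mm00Matrix, Matrix.mul_add, Matrix.mul_smul, snocMatrix, consMatrix,
    relMatrix_transpose, relMatrix_transpose, relMatrix_transpose,
    relMatrix_mul_relMatrix_eq_zero, relMatrix_mul_relMatrix_eq_zero, smul_zero, add_zero]
  · rintro s y _ rfl ⟨a, ha⟩
    exact ((mem_mm00_iff s.1.2).1 s.2).1 (ha ▸ sharesFirst_consPair _ _)
  · rintro s y _ rfl ⟨b, hb⟩
    exact ((mem_mm00_iff s.1.2).1 s.2).2.1 (hb ▸ sharesLast_snocPair _ _)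

theorem coeffMatrix_mul_mm00Matrix (hs : StringData Q R) (hquad : ∀ r ∈ R, r.length = 2)
    {m : ℕ} (hm : 1 ≤ m) : coeffMatrix Q k R (m + 1) * mm00Matrix Q k R (m + 1) = 0 := by
  rw [coeffMatrix, mm00Matrix, Matrix.add_mul, Matrix.smul_mul, snocMatrix, consMatrix,
    relMatrix_transpose, relMatrix_transpose, relMatrix_mul_relMatrix_eq_zero,
    relMatrix_mul_relMatrix_eq_zero, smul_zero, add_zero]
  · rintro x s _ ⟨a, ha⟩ rfl
    obtain ⟨-, -, hli, -⟩ := (mem_mm00_iff s.1.2).1 s.2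
    exact ((exists_isBasisPair_consPair_iff hs hquad (.of_mem hs hquad (by omega) s.1.2)).1
      ⟨a, ha ▸ .of_mem hs hquad (by omega) x.2⟩).2 hli
  · rintro x s _ ⟨b, hb⟩ rfl
    obtain ⟨-, -, -, hri⟩ := (mem_mm00_iff s.1.2).1 s.2
    exact ((exists_isBasisPair_snocPair_iff hs hquad (.of_mem hs hquad (by omega) s.1.2)).1
      ⟨b, hb ▸ .of_mem hs hquad (by omega) x.2⟩).2 hri

end Complex

section Cohomology

open scoped Matrix

variable {Q} {R : Set (List Q.E)} [∀ j, Fintype ↥(PairSet Q R j)] {k}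

theorem finrank_HHn (hs : StringData Q R) (hquad : ∀ r ∈ R, r.length = 2) {n : ℕ}
    (hn : 2 ≤ n) : Module.finrank k (HHn Q k R n) = (mm00 Q R n).ncard := by
  obtain ⟨m, rfl⟩ : ∃ m, n = m + 1 := ⟨n - 1, by omega⟩
  have hm : 1 ≤ m := by omega
  have e := cohomologyEquivOfHomotopy (F Q k R (m + 1)) (F Q k R (m + 1 + 1))
    (Matrix.mulVecLin (mm00Matrix Q k R (m + 1))ᵀ) (Matrix.mulVecLin (mm00Matrix Q k R (m + 1)))
    (Matrix.mulVecLin (homotopyMatrix Q k R m)) (Matrix.mulVecLin (homotopyMatrix Q k R (m + 1)))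
    (fun g => by
      simp only [Matrix.mulVecLin_apply, Matrix.mulVec_mulVec, mm00Matrix_transpose_mul,
        Matrix.one_mulVec])
    (fun g => by
      simp only [F_succ_eq hs hquad (Nat.le_succ_of_le hm), Matrix.mulVecLin_apply,
        Matrix.mulVec_mulVec, coeffMatrix_mul_mm00Matrix hs hquad hm, Matrix.zero_mulVec])
    (fun v => by
      simp only [F_succ_eq hs hquad hm, Matrix.mulVecLin_apply, Matrix.mulVec_mulVec,
        mm00Matrix_transpose_mul_coeffMatrix, Matrix.zero_mulVec])
    (fun v => by
      simp only [F_succ_eq hs hquad hm, F_succ_eq hs hquad (Nat.le_succ_of_le hm),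
        Matrix.mulVecLin_apply, Matrix.mulVec_mulVec, ← Matrix.add_mulVec,
        homotopyMatrix_mul_add_mul_homotopyMatrix hs hquad hm, Matrix.sub_mulVec,
        Matrix.one_mulVec, mm00Matrix_mul_transpose])
  refine e.finrank_eq.trans ?_
  rw [Module.finrank_pi, ← Nat.card_eq_fintype_card,
    Nat.card_congr (Equiv.subtypeSubtypeEquivSubtype fun hx => hx.1.1), Nat.card_coe_set_eq]

end Cohomology

theorem statement11_general (Q : QuivData) (R : Set (List Q.E)) (hs : StringData Q R)
    (hquad : ∀ r ∈ R, r.length = 2)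
    (k : Type) [Field k] [∀ j, Fintype ↥(PairSet Q R j)] :
    ∀ n, 2 ≤ n → pm01 Q R n = ∅ ∧
      Module.finrank k (HHn Q k R n) = (mm00 Q R n).ncard :=
  fun _ hn => ⟨pm01_eq_empty hs hquad hn, finrank_HHn hs hquad hn⟩

/-- **Corollary (quadratic case) / Statement 11.** If `A = kQ/I` is a
triangular string algebra all of whose relations are quadratic (e.g. a gentle
triangular algebra), then `⁺⁻(0,1)_n = ∅` for `n ≥ 2`, and hence
`dim_k HH^n(A) = |⁻(0,0)⁻_n|` for all `n ≥ 2`. -/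
theorem statement11 (Q : QuivData) (R : Set (List Q.E)) (hs : StringData Q R)
    (hquad : ∀ r ∈ R, r.length = 2)
    (k : Type) [Field k] [Fintype Q.V] [∀ j, Fintype ↥(PairSet Q R j)] :
    ∀ n, 2 ≤ n → pm01 Q R n = ∅ ∧
      Module.finrank k (HHn Q k R n) = (mm00 Q R n).ncard :=
  statement11_general Q R hs hquad k

end Paper
end
end

section
/- For a triangular string algebra A = kQ/I, the following are equivalent: (i) HH^1(A) = 0; (ii) the underlying graph of Q is a tree; (iii) HH^i(A) = 0 for all i > 0; (iv) A is simply connected. -/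
/-!
Common framework for formalizing "Hochschild cohomology of triangular string
algebras and its ring structure" (Redondo–Román).

* Interval combinatorics model of Bardzell's `n`-concatenations along a directed
  path (a directed path is modelled by the line `ℕ`, a subpath by an interval,
  and a relation by the interval it occupies).
* A combinatorial model of a bound quiver `(Q, I)` with `I` a monomial ideal
  generated by a reduced set `R` of paths: paths are nonempty composable lists
  of arrows, `AP_n` is the set of supports of `n`-concatenations, `𝒫` is the
  basis of `A = kQ/I` given by the paths not in `I`.
* The Hochschild complex `Hom_{E-E}(kAP_n, A) ≅ k(AP_n ∥ 𝒫)` of a (triangular)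
  monomial algebra obtained from Bardzell's minimal resolution, with its
  differentials `F_n` realized as explicit matrices, and the Hochschild
  cohomology `HH^n(A)` defined as the cohomology of this complex (for monomial
  algebras this complex computes Hochschild cohomology, by Bardzell's theorem).
-/

attribute [local instance] Classical.propDecidable

noncomputable section

namespace Paper

variable (Q : QuivData)

/-! ### The Hochschild complex obtained from Bardzell's resolution -/

variable (k : Type) [Field k]

/-!
Bardzell's complex pairs each arrow `a` with the cochain `([a], [a])` of degree one. These are
cocycles, and on them `F₁` is the incidence map `k^{Q₀} → k^{Q₁}`, `f ↦ (f (t a) - f (s a))ₐ`,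
whose kernel on a connected quiver is the line of constants. So `HH¹(A) = 0` makes the incidence
map onto, which by rank–nullity means `|Q₁| + 1 = |Q₀|`: `Q` is a tree.

Conversely, in a tree two parallel paths coincide (both are paths of the underlying graph, which
is a tree, and arrows are determined by their edges). Hence `(AP₁ ∥ 𝒫)` consists of the pairs
`([a], [a])`, on which `F₁` is the now surjective incidence map, and `(AP_n ∥ 𝒫)` is empty for
`n ≥ 2`, since `AP_n ⊆ I` while `𝒫 ∩ I = ∅`.
-/

/-- `connectedQ Q` unfolds to `Q.graph.Connected`. -/
def QuivData.graph (Q : QuivData) : SimpleGraph Q.V :=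
  SimpleGraph.fromRel fun u v => ∃ a : Q.E, Q.src a = u ∧ Q.tgt a = v

def QuivData.edge (Q : QuivData) (a : Q.E) : Sym2 Q.V := s(Q.src a, Q.tgt a)

section Graph

open SimpleGraph

variable {Q : QuivData} {R : Set (List Q.E)}

lemma StringData.src_ne_tgt (hs : StringData Q R) (a : Q.E) : Q.src a ≠ Q.tgt a := by
  simpa [psrc, ptgt] using hs.triangular [a] ⟨by simp, List.isChain_singleton a⟩

lemma StringData.graph_adj (hs : StringData Q R) (a : Q.E) : Q.graph.Adj (Q.src a) (Q.tgt a) :=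
  (fromRel_adj _ _ _).mpr ⟨hs.src_ne_tgt a, .inl ⟨a, rfl, rfl⟩⟩

lemma StringData.surjective_edge (hs : StringData Q R) :
    Function.Surjective fun a => (⟨Q.edge a, hs.graph_adj a⟩ : Q.graph.edgeSet) := by
  rintro ⟨e, he⟩
  induction e with
  | _ u v =>
    rw [mem_edgeSet, QuivData.graph, fromRel_adj] at he
    rcases he with ⟨-, ⟨a, rfl, rfl⟩ | ⟨a, rfl, rfl⟩⟩
    · exact ⟨a, rfl⟩
    · exact ⟨a, Subtype.ext Sym2.eq_swap⟩

lemma IsTreeQuiv.isTree_and_injective_edge [Fintype Q.V] [Fintype Q.E]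
    (hs : StringData Q R) (ht : IsTreeQuiv Q) :
    Q.graph.IsTree ∧ Function.Injective Q.edge := by
  have hle : Nat.card Q.graph.edgeSet ≤ Nat.card Q.E :=
    Nat.card_le_card_of_surjective _ hs.surjective_edge
  have hge : Nat.card Q.V ≤ Nat.card Q.graph.edgeSet + 1 :=
    Connected.card_vert_le_card_edgeSet_add_one ht.1
  have hcard : Nat.card Q.E + 1 = Nat.card Q.V := by
    simpa only [Nat.card_eq_fintype_card] using ht.2
  have heq : Nat.card Q.graph.edgeSet = Nat.card Q.E := by omega
  refine ⟨isTree_iff_connected_and_card.mpr ⟨ht.1, heq ▸ hcard⟩, fun a b hab => ?_⟩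
  exact (hs.surjective_edge.bijective_of_nat_card_le heq.ge).1 (Subtype.ext hab)

end Graph

section Paths

open SimpleGraph

variable {Q : QuivData} {R : Set (List Q.E)}

lemma psrc_cons (a : Q.E) (l : List Q.E) : psrc Q (a :: l) = some (Q.src a) := rfl

lemma IsPathL.tail {a : Q.E} {l : List Q.E} (h : IsPathL Q (a :: l)) (hl : l ≠ []) :
    IsPathL Q l ∧ psrc Q l = some (Q.tgt a) := by
  obtain ⟨b, t, rfl⟩ := List.exists_cons_of_ne_nil hl
  have h2 := List.isChain_cons_cons.mp h.2
  exact ⟨⟨by simp, h2.2⟩, by rw [psrc_cons, h2.1]⟩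

/-- A path returning to its source would be an oriented cycle. -/
lemma StringData.src_not_mem_map_tgt (hs : StringData Q R) {l : List Q.E} {u : Q.V}
    (hp : IsPathL Q l) (hu : psrc Q l = some u) : u ∉ l.map Q.tgt := by
  rw [List.mem_map]
  rintro ⟨a, ha, rfl⟩
  obtain ⟨s, t, rfl⟩ := List.append_of_mem ha
  have hpath : IsPathL Q (s ++ [a]) := ⟨by simp, hp.2.prefix ⟨t, by simp⟩⟩
  have hsrc : psrc Q (s ++ [a]) = some (Q.tgt a) := by
    cases s <;> exact hu
  exact hs.triangular _ hpath (hsrc.trans (by simp [ptgt]))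

lemma StringData.nodup_vertices (hs : StringData Q R) :
    ∀ (l : List Q.E) (u : Q.V), IsPathL Q l → psrc Q l = some u →
      (u :: l.map Q.tgt).Nodup
  | [], _, hp, _ => absurd rfl hp.1
  | a :: t, u, hp, hu => by
    refine List.nodup_cons.mpr ⟨hs.src_not_mem_map_tgt hp hu, ?_⟩
    rcases eq_or_ne t [] with rfl | ht
    · simp
    · obtain ⟨hp', hsrc'⟩ := hp.tail ht
      simpa using hs.nodup_vertices t _ hp' hsrc'

lemma StringData.exists_walk (hs : StringData Q R) :
    ∀ (l : List Q.E) (u v : Q.V), IsPathL Q l → psrc Q l = some u → ptgt Q l = some v →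
      ∃ w : Q.graph.Walk u v, w.support = u :: l.map Q.tgt ∧ w.edges = l.map Q.edge
  | [], _, _, hp, _, _ => absurd rfl hp.1
  | a :: t, u, v, hp, hu, hv => by
    obtain rfl : Q.src a = u := Option.some_inj.mp hu
    rcases eq_or_ne t [] with rfl | ht
    · obtain rfl : Q.tgt a = v := by simpa [ptgt] using hv
      exact ⟨.cons (hs.graph_adj a) .nil, by simp, by simp [QuivData.edge]⟩
    · obtain ⟨hp', hsrc'⟩ := hp.tail ht
      obtain ⟨w, hws, hwe⟩ := hs.exists_walk t _ v hp' hsrc' (by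
        obtain ⟨b, t', rfl⟩ := List.exists_cons_of_ne_nil ht
        simpa [ptgt] using hv)
      exact ⟨.cons (hs.graph_adj a) w, by simp [hws], by simp [hwe, QuivData.edge]⟩

lemma StringData.exists_path (hs : StringData Q R) {l : List Q.E} {u v : Q.V}
    (hp : IsPathL Q l) (hu : psrc Q l = some u) (hv : ptgt Q l = some v) :
    ∃ p : Q.graph.Path u v, p.1.edges = l.map Q.edge := by
  obtain ⟨w, hws, hwe⟩ := hs.exists_walk l u v hp hu hv
  exact ⟨⟨w, (Walk.isPath_def w).mpr (hws ▸ hs.nodup_vertices l u hp hu)⟩, hwe⟩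

lemma IsTreeQuiv.eq_of_parallel [Fintype Q.V] [Fintype Q.E] (hs : StringData Q R)
    (ht : IsTreeQuiv Q) {l₁ l₂ : List Q.E} (h₁ : IsPathL Q l₁) (h₂ : IsPathL Q l₂)
    (hsrc : psrc Q l₁ = psrc Q l₂) (htgt : ptgt Q l₁ = ptgt Q l₂) : l₁ = l₂ := by
  obtain ⟨htree, hinj⟩ := ht.isTree_and_injective_edge hs
  obtain ⟨a, t, rfl⟩ := List.exists_cons_of_ne_nil h₁.1
  obtain ⟨v, hv⟩ : ∃ v, ptgt Q (a :: t) = some v := by simp [ptgt, List.getLast?_cons]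
  obtain ⟨p₁, hp₁⟩ := hs.exists_path h₁ rfl hv
  obtain ⟨p₂, hp₂⟩ := hs.exists_path h₂ hsrc.symm (htgt ▸ hv)
  have hp : p₁ = p₂ := (htree.isAcyclic.subsingleton_path _ _).elim p₁ p₂
  exact (List.map_injective_iff.mpr hinj) (hp₁.symm.trans (hp ▸ hp₂))

end Paths

section Cochains

variable {Q : QuivData} {R : Set (List Q.E)}

lemma StringData.pair_mem_pairSet_one (hs : StringData Q R) (a : Q.E) :
    (([a], [a]) : Pr Q) ∈ PairSet Q R 1 := by
  have hpath : IsPathL Q [a] := ⟨by simp, List.isChain_singleton a⟩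
  refine ⟨⟨hpath, rfl⟩, ⟨hpath, ?_⟩, rfl, rfl⟩
  rintro ⟨r, hr, hinf⟩
  have := hinf.length_le
  have := (hs.relPath r hr).2
  simp only [List.length_singleton] at *
  omega

def StringData.diagPair (hs : StringData Q R) (a : Q.E) : PairSet Q R 1 :=
  ⟨([a], [a]), hs.pair_mem_pairSet_one a⟩

lemma StringData.diagPair_injective (hs : StringData Q R) : Function.Injective hs.diagPair :=
  fun a b hab => by simpa [StringData.diagPair] using congrArg (fun x => x.val.1) hab

lemma IsAP.isPathL {n : ℕ} {w : List Q.E} (hn : 1 ≤ n) (h : IsAP Q R n w) : IsPathL Q w := by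
  match n, hn with
  | 1, _ => exact h.1
  | m + 2, _ => exact h.1

lemma IsAP.inI {n : ℕ} {w : List Q.E} (hn : 2 ≤ n) (h : IsAP Q R n w) : inI Q R w := by
  obtain ⟨m, rfl⟩ : ∃ m, n = m + 2 := ⟨n - 2, by omega⟩
  obtain ⟨-, p, hc, -, -⟩ := h
  exact ⟨slice Q w (p 0), hc.1.2.2,
    (List.take_prefix _ _).isInfix.trans (List.drop_suffix _ _).isInfix⟩

lemma IsAP.mem_of_two {w : List Q.E} (h : IsAP Q R 2 w) : w ∈ R := by
  obtain ⟨-, p, hc, h0, h1⟩ := h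
  have hmem := hc.1.2.2
  rwa [show p 0 = (0, w.length) from Prod.ext h0 h1, slice, List.drop_zero, Nat.sub_zero,
    List.take_length] at hmem

lemma take_append_slice_append_drop {l : List Q.E} {c : Iv} (h : c.1 ≤ c.2) :
    l.take c.1 ++ slice Q l c ++ l.drop c.2 = l := by
  rw [slice, List.append_assoc, show l.drop c.2 = (l.drop c.1).drop (c.2 - c.1) by
    rw [List.drop_drop]; congr 1; omega, List.take_append_drop, List.take_append_drop]

variable (k : Type) [Field k]

/-- A division `w = L y.1 R` with `x.2 = L y.2 R` and `y.2 = y.1` would give `x.2 = x.1 = w`;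
but `w ∈ AP₂ = R` lies in `I` while `x.2 ∈ 𝒫` does not. -/
lemma coeffF_two_eq_zero_of_diag {x y : Pr Q} (hx : x ∈ PairSet Q R 2) (hy : y.2 = y.1) :
    coeffF Q k R 2 y x = 0 := by
  refine (finsum_congr fun c => if_neg ?_).trans finsum_zero
  rintro ⟨hlt, -, -, hsl, hcomb⟩
  have hxx : x.2 = x.1 := by rw [hcomb, hy, hsl, take_append_slice_append_drop hlt.le]
  exact hx.2.1.2 (hxx ▸ ⟨x.1, hx.1.mem_of_two, List.infix_refl _⟩)

lemma StringData.single_diagPair_mem_ker [∀ j, Fintype (PairSet Q R j)] (hs : StringData Q R)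
    (a : Q.E) : Pi.single (hs.diagPair a) (1 : k) ∈ LinearMap.ker (F Q k R 2) := by
  ext x
  simp [F, Matrix.mulVec_single, StringData.diagPair,
    coeffF_two_eq_zero_of_diag k x.2 (y := ([a], [a])) rfl]

end Cochains

section Incidence

open Module

variable (Q : QuivData) (k : Type) [Field k]

def incidence : (Q.V → k) →ₗ[k] (Q.E → k) where
  toFun f a := f (Q.tgt a) - f (Q.src a)
  map_add' f g := by ext; simp only [Pi.add_apply]; ring
  map_smul' c f := by ext; simp only [Pi.smul_apply, smul_eq_mul, RingHom.id_apply]; ring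

variable {Q k}

@[simp]
lemma incidence_apply (f : Q.V → k) (a : Q.E) : incidence Q k f a = f (Q.tgt a) - f (Q.src a) :=
  rfl

lemma ker_incidence (hconn : connectedQ Q) :
    LinearMap.ker (incidence Q k) = Submodule.span k {1} := by
  refine le_antisymm (fun f hf => ?_) ((Submodule.span_singleton_le_iff_mem _ _).mpr ?_)
  · have hadj : ∀ u v, Q.graph.Adj u v → f u = f v := by
      rintro u v ⟨-, ⟨a, rfl, rfl⟩ | ⟨a, rfl, rfl⟩⟩
      · exact (sub_eq_zero.mp (congrFun hf a)).symm
      · exact sub_eq_zero.mp (congrFun hf a)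
    obtain ⟨r⟩ := hconn.nonempty
    refine Submodule.mem_span_singleton.mpr ⟨f r, funext fun v => ?_⟩
    obtain ⟨w⟩ := hconn.preconnected r v
    suffices f r = f v by simp [this]
    induction w with
    | nil => rfl
    | cons h _ ih => exact (hadj _ _ h).trans ih
  · ext a
    simp

lemma incidence_surjective_iff [Fintype Q.V] [Fintype Q.E] (hconn : connectedQ Q) :
    Function.Surjective (incidence Q k) ↔ Fintype.card Q.E + 1 = Fintype.card Q.V := by
  have hker : finrank k (LinearMap.ker (incidence Q k)) = 1 := by
    obtain ⟨r⟩ := hconn.nonempty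
    rw [ker_incidence hconn, finrank_span_singleton (Function.ne_iff.mpr ⟨r, one_ne_zero⟩)]
  have hrank := LinearMap.finrank_range_add_finrank_ker (incidence Q k)
  rw [hker, finrank_pi] at hrank
  rw [← LinearMap.range_eq_top]
  constructor
  · intro h
    rwa [h, finrank_top, finrank_pi] at hrank
  · intro h
    exact Submodule.eq_top_of_finrank_eq (by rw [finrank_pi]; omega)

end Incidence

section Cohomology

variable {Q : QuivData} {R : Set (List Q.E)} {k : Type} [Field k]

lemma StringData.F1_apply_diagPair [Fintype Q.V] [Fintype (PairSet Q R 1)]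
    (hs : StringData Q R) (f : Q.V → k) (a : Q.E) :
    F1 Q k R f (hs.diagPair a) = incidence Q k f a := by
  simp [F1, Matrix.mulVec, dotProduct, StringData.diagPair, ptgt, psrc, sub_mul,
    Finset.sum_sub_distrib]

lemma subsingleton_HH1_iff [Fintype Q.V] [∀ j, Fintype (PairSet Q R j)] :
    Subsingleton (HH1 Q k R) ↔ LinearMap.ker (F Q k R 2) ≤ LinearMap.range (F1 Q k R) :=
  Submodule.Quotient.subsingleton_iff.trans Submodule.comap_subtype_eq_top

lemma subsingleton_HHn_of_isEmpty [∀ j, Fintype (PairSet Q R j)] (n : ℕ)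
    [IsEmpty (PairSet Q R n)] : Subsingleton (HHn Q k R n) := by
  have : Subsingleton (PairSet Q R (n + 1 - 1) → k) := by
    rw [Nat.add_sub_cancel]
    infer_instance
  infer_instance

lemma StringData.incidence_surjective_of_subsingleton_HH1 [Fintype Q.V] [Fintype Q.E]
    [∀ j, Fintype (PairSet Q R j)] (hs : StringData Q R) (h : Subsingleton (HH1 Q k R)) :
    Function.Surjective (incidence Q k) := by
  classical
  rw [← LinearMap.range_eq_top, eq_top_iff, ← (Pi.basisFun k Q.E).span_eq, Submodule.span_le]
  rintro _ ⟨a, rfl⟩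
  obtain ⟨f, hf⟩ := subsingleton_HH1_iff.mp h (hs.single_diagPair_mem_ker k a)
  refine ⟨f, funext fun b => ?_⟩
  rw [← hs.F1_apply_diagPair, hf, Pi.basisFun_apply]
  by_cases hba : b = a
  · simp [hba]
  · simp [hba, hs.diagPair_injective.ne hba]

namespace IsTreeQuiv

variable [Fintype Q.V] [Fintype Q.E]

lemma diagPair_surjective (hs : StringData Q R) (ht : IsTreeQuiv Q) :
    Function.Surjective hs.diagPair := by
  rintro ⟨⟨w, γ⟩, ⟨hw, hlen⟩, hγ, hsrc, htgt⟩
  obtain ⟨a, rfl⟩ := List.length_eq_one_iff.mp hlen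
  obtain rfl : γ = [a] := ht.eq_of_parallel hs hγ.1 hw hsrc.symm htgt.symm
  exact ⟨a, rfl⟩

lemma range_F1 [Fintype (PairSet Q R 1)] (hs : StringData Q R) (ht : IsTreeQuiv Q) :
    LinearMap.range (F1 Q k R) = ⊤ := by
  refine LinearMap.range_eq_top.mpr fun g => ?_
  obtain ⟨f, hf⟩ := (incidence_surjective_iff ht.1).mpr ht.2 (g ∘ hs.diagPair)
  refine ⟨f, funext fun x => ?_⟩
  obtain ⟨a, rfl⟩ := diagPair_surjective hs ht x
  rw [hs.F1_apply_diagPair, hf, Function.comp_apply]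

lemma isEmpty_pairSet (hs : StringData Q R) (ht : IsTreeQuiv Q) {n : ℕ} (hn : 2 ≤ n) :
    IsEmpty (PairSet Q R n) := by
  refine ⟨fun ⟨⟨w, γ⟩, hw, hγ, hsrc, htgt⟩ => hγ.2 ?_⟩
  rw [ht.eq_of_parallel hs hγ.1 (hw.isPathL (by omega)) hsrc.symm htgt.symm]
  exact hw.inI hn

end IsTreeQuiv

end Cohomology

/-- **Corollary 4.6 / Statement 12.** For a connected triangular string
algebra `A = kQ/I` the following are equivalent: (i) `HH^1(A) = 0`; (ii) the
underlying graph of `Q` is a tree; (iii) `HH^i(A) = 0` for all `i > 0`;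
(iv) `A` is simply connected. -/
theorem statement12 (Q : QuivData) (R : Set (List Q.E)) (hs : StringData Q R)
    (k : Type) [Field k] [Fintype Q.V] [Fintype Q.E]
    [∀ j, Fintype ↥(PairSet Q R j)] (hconn : connectedQ Q) :
    (Subsingleton (HH1 Q k R) ↔ IsTreeQuiv Q) ∧
    (IsTreeQuiv Q ↔
      (Subsingleton (HH1 Q k R) ∧ ∀ i, 2 ≤ i → Subsingleton (HHn Q k R i))) ∧
    (IsTreeQuiv Q ↔ SimplyConnected Q) := by
  have of_HH1 (h : Subsingleton (HH1 Q k R)) : IsTreeQuiv Q :=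
    ⟨hconn, (incidence_surjective_iff (k := k) hconn).mp
      (hs.incidence_surjective_of_subsingleton_HH1 h)⟩
  have HH1_of (ht : IsTreeQuiv Q) : Subsingleton (HH1 Q k R) :=
    subsingleton_HH1_iff.mpr ((ht.range_F1 (k := k) hs).symm ▸ le_top)
  have HHn_of (ht : IsTreeQuiv Q) (i : ℕ) (hi : 2 ≤ i) : Subsingleton (HHn Q k R i) :=
    have := ht.isEmpty_pairSet hs hi
    subsingleton_HHn_of_isEmpty i
  exact ⟨⟨of_HH1, HH1_of⟩, ⟨fun ht => ⟨HH1_of ht, HHn_of ht⟩, fun h => of_HH1 h.1⟩, Iff.rfl⟩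

end Paper
end
end

section
/- If n is even and w ∈ AP_{n+m} factors as w = w' u w'' with w' ∈ AP_n, w'' ∈ AP_m, then the only ψ ∈ AP_n with L(ψ)ψR(ψ) = w'u is ψ = w' itself (taking R(ψ) = u); that is, the lifting map satisfies f_n(1⊗w⊗1) = 1 ⊗ w' ⊗ u·f̂(w''). -/
/-!
Common framework for formalizing "Hochschild cohomology of triangular string
algebras and its ring structure" (Redondo–Román).

* Interval combinatorics model of Bardzell's `n`-concatenations along a directed
  path (a directed path is modelled by the line `ℕ`, a subpath by an interval,
  and a relation by the interval it occupies).
* A combinatorial model of a bound quiver `(Q, I)` with `I` a monomial ideal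
  generated by a reduced set `R` of paths: paths are nonempty composable lists
  of arrows, `AP_n` is the set of supports of `n`-concatenations, `𝒫` is the
  basis of `A = kQ/I` given by the paths not in `I`.
* The Hochschild complex `Hom_{E-E}(kAP_n, A) ≅ k(AP_n ∥ 𝒫)` of a (triangular)
  monomial algebra obtained from Bardzell's minimal resolution, with its
  differentials `F_n` realized as explicit matrices, and the Hochschild
  cohomology `HH^n(A)` defined as the cohomology of this complex (for monomial
  algebras this complex computes Hochschild cohomology, by Bardzell's theorem).
-/

attribute [local instance] Classical.propDecidable

noncomputable section

namespace Paper

variable (Q : QuivData)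

/-! ### The Hochschild complex obtained from Bardzell's resolution -/

variable (k : Type) [Field k]

/-! A support `w ∈ AP_n` determines its concatenation, because every relation after the first
is the one of minimal source in a window fixed by its predecessors. If `ψ ∈ AP_n` started
strictly after `w'`, it would start at or after `p_2`, and for even `n` this lag of one
relation persists along the greedy choice, so `ψ` would end no earlier than `p_n`. The factor
`w'' ∈ AP_m^{op}` is built back from the last relation of `p`, losing less than one relation
of `p` per step, so it begins before `p_n` ends; hence `ψ` does not fit inside `w' u`. -/

section Concatenations

variable {R : Set Iv}

namespace RelSet

theorem fst_le_fst_iff (hR : RelSet R) {r s : Iv} (hr : r ∈ R) (hs : s ∈ R) :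
    r.1 ≤ s.1 ↔ r.2 ≤ s.2 := by
  constructor
  · intro h
    by_contra! h'
    have := hR.nodiv r hr s hs h h'.le
    subst this
    exact lt_irrefl _ h'
  · intro h
    by_contra! h'
    have := hR.nodiv s hs r hr h'.le h
    subst this
    exact lt_irrefl _ h'

theorem fst_lt_fst_of_snd_lt (hR : RelSet R) {r s : Iv} (hr : r ∈ R) (hs : s ∈ R)
    (h : r.2 < s.2) : r.1 < s.1 :=
  lt_of_not_ge fun h' => h.not_ge ((hR.fst_le_fst_iff hs hr).1 h')

theorem eq_of_fst_eq (hR : RelSet R) {r s : Iv} (hr : r ∈ R) (hs : s ∈ R)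
    (h : r.1 = s.1) : r = s :=
  hR.nodiv r hr s hs h.le ((hR.fst_le_fst_iff hs hr).1 h.ge)

theorem eq_of_snd_eq (hR : RelSet R) {r s : Iv} (hr : r ∈ R) (hs : s ∈ R)
    (h : r.2 = s.2) : r = s :=
  hR.nodiv r hr s hs ((hR.fst_le_fst_iff hr hs).2 h.le) h.ge

end RelSet

namespace IsConcat

variable {K : ℕ} {p : ℕ → Iv}

theorem mem_s17 (hp : IsConcat R K p) {i : ℕ} (hi : i < K) : p i ∈ R := by
  rcases i with _ | i
  · exact hp.1
  · have h := (hp.2 (i + 1) (by omega) hi).1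
    unfold cWindow at h
    split at h <;> exact h.1

theorem window_one (hp : IsConcat R K p) (h : 1 < K) :
    (p 0).1 < (p 1).1 ∧ (p 1).1 < (p 0).2 ∧
      ∀ x ∈ R, (p 0).1 < x.1 → x.1 < (p 0).2 → (p 1).1 ≤ x.1 := by
  obtain ⟨hmem, hmin⟩ := hp.2 1 le_rfl h
  simp only [cWindow] at hmem hmin
  exact ⟨hmem.2.1, hmem.2.2, fun x hx h1 h2 => hmin x ⟨hx, h1, h2⟩⟩

theorem window_add_two (hp : IsConcat R K p) {j : ℕ} (h : j + 2 < K) :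
    (p j).2 ≤ (p (j + 2)).1 ∧ (p (j + 2)).1 < (p (j + 1)).2 ∧
      ∀ x ∈ R, (p j).2 ≤ x.1 → x.1 < (p (j + 1)).2 → (p (j + 2)).1 ≤ x.1 := by
  obtain ⟨hmem, hmin⟩ := hp.2 (j + 2) (by omega) h
  simp only [cWindow, if_neg (show j + 2 ≠ 1 by omega), Nat.add_sub_cancel,
    show j + 2 - 1 = j + 1 by omega] at hmem hmin
  exact ⟨hmem.2.1, hmem.2.2, fun x hx h1 h2 => hmin x ⟨hx, h1, h2⟩⟩

theorem fst_succ_lt_snd (hp : IsConcat R K p) {i : ℕ} (h : i + 1 < K) :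
    (p (i + 1)).1 < (p i).2 := by
  rcases i with _ | i
  · exact (hp.window_one h).2.1
  · exact (hp.window_add_two h).2.1

theorem fst_one_le (hp : IsConcat R K p) (h : 1 < K) {x : Iv} (hx : x ∈ R)
    (hlt : (p 0).1 < x.1) : (p 1).1 ≤ x.1 := by
  obtain ⟨-, hp1, hmin⟩ := hp.window_one h
  by_cases hx0 : x.1 < (p 0).2
  · exact hmin x hx hlt hx0
  · omega

theorem eq_of_fst_eq (hR : RelSet R) {K' : ℕ} {q : ℕ → Iv} (hp : IsConcat R K p)
    (hq : IsConcat R K' q) (hK : K' ≤ K) (h0 : (p 0).1 = (q 0).1) :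
    ∀ i < K', p i = q i := by
  intro i
  induction i using Nat.strong_induction_on with
  | _ i IH =>
  intro hi
  have hpi := hp.mem_s17 (show i < K by omega)
  have hqi := hq.mem_s17 hi
  refine hR.eq_of_fst_eq hpi hqi ?_
  rcases i with _ | _ | j
  · exact h0
  · have e0 : p 0 = q 0 := IH 0 (by omega) (by omega)
    obtain ⟨a1, a2, amin⟩ := hp.window_one (show 1 < K by omega)
    obtain ⟨b1, b2, bmin⟩ := hq.window_one hi
    rw [e0] at a1 a2 amin
    exact le_antisymm (amin _ hqi b1 b2) (bmin _ hpi a1 a2)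
  · have ej : p j = q j := IH j (by omega) (by omega)
    have ej1 : p (j + 1) = q (j + 1) := IH (j + 1) (by omega) (by omega)
    obtain ⟨a1, a2, amin⟩ := hp.window_add_two (show j + 2 < K by omega)
    obtain ⟨b1, b2, bmin⟩ := hq.window_add_two hi
    simp only [ej, ej1] at a1 a2 amin
    exact le_antisymm (amin _ hqi b1 b2) (bmin _ hpi a1 a2)

theorem fst_add_three_le (hR : RelSet R) {K' : ℕ} {q : ℕ → Iv} (hp : IsConcat R K p)
    (hq : IsConcat R K' q) {i : ℕ} (hiK : i + 3 < K) (hiK' : i + 2 < K')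
    (h : (p (i + 1)).1 ≤ (q i).1) : (p (i + 3)).1 ≤ (q (i + 2)).1 := by
  have hsnd : (p (i + 1)).2 ≤ (q i).2 :=
    (hR.fst_le_fst_iff (hp.mem_s17 (by omega)) (hq.mem_s17 (by omega))).1 h
  obtain ⟨hq1, -, -⟩ := hq.window_add_two hiK'
  obtain ⟨-, hp2, hpmin⟩ := hp.window_add_two (show i + 1 + 2 < K by omega)
  by_cases hlt : (q (i + 2)).1 < (p (i + 2)).2
  · exact hpmin _ (hq.mem_s17 hiK') (by omega) hlt
  · exact (hp2.trans_le (not_lt.1 hlt)).le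

theorem fst_succ_le_fst_of_even (hR : RelSet R) {K' : ℕ} {q : ℕ → Iv}
    (hp : IsConcat R K p) (hq : IsConcat R K' q) (hK : K' < K) (h0 : (p 0).1 < (q 0).1)
    {i : ℕ} (hi : Even i) (hiK' : i < K') : (p (i + 1)).1 ≤ (q i).1 := by
  obtain ⟨r, rfl⟩ := hi
  induction r with
  | zero => exact hp.fst_one_le (by omega) hq.1 h0
  | succ r IH =>
    rw [show r + 1 + (r + 1) = r + r + 2 by omega]
    exact hp.fst_add_three_le hR hq (by omega) (by omega) (IH (by omega))

theorem fst_lt_snd_of_snd_lt (hR : RelSet R) (hp : IsConcat R K p) {s : ℕ}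
    (hs : s + 2 < K) {x : Iv} (hx : x ∈ R) (hlt : x.2 < (p (s + 2)).2) :
    x.1 < (p s).2 := by
  have hps1 := hp.mem_s17 (show s + 1 < K by omega)
  obtain ⟨-, hp2, hpmin⟩ := hp.window_add_two hs
  by_cases hle : x.2 ≤ (p (s + 1)).2
  · have := (hR.fst_le_fst_iff hx hps1).2 hle
    have := hp.fst_succ_lt_snd (show s + 1 < K by omega)
    omega
  · have hx2 := hR.fst_lt_fst_of_snd_lt hx (hp.mem_s17 hs) hlt
    by_contra! hge
    exact absurd (hpmin x hx hge (by omega)) (by omega)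

end IsConcat

namespace IsOpConcat

variable {K : ℕ} {q : ℕ → Iv}

theorem mem_s17 (hq : IsOpConcat R K q) {i : ℕ} (hi : i < K) : q i ∈ R := by
  rcases i with _ | i
  · exact hq.1
  · have h := (hq.2 (i + 1) (by omega) hi).1
    unfold oWindow at h
    split at h <;> exact h.1

theorem snd_one_lt (hq : IsOpConcat R K q) (h : 1 < K) : (q 1).2 < (q 0).2 := by
  have hmem := (hq.2 1 le_rfl h).1
  simp only [oWindow] at hmem
  exact hmem.2.2

theorem snd_le_fst (hq : IsOpConcat R K q) {j : ℕ} (h : j + 2 < K) :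
    (q (j + 2)).2 ≤ (q j).1 := by
  have hmem := (hq.2 (j + 2) (by omega) h).1
  simp only [oWindow, if_neg (show j + 2 ≠ 1 by omega), Nat.add_sub_cancel] at hmem
  exact hmem.2.2

theorem fst_lt_snd_of_eq_last (hR : RelSet R) {N : ℕ} {p : ℕ → Iv}
    (hp : IsConcat R (N + 2) p) (hq : IsOpConcat R K q) (h0 : q 0 = p (N + 1)) :
    ∀ j < K, ∀ s, s + j = N → (q j).1 < (p s).2 := by
  intro j
  induction j using Nat.strong_induction_on with
  | _ j IH =>
  intro hj s hs
  rcases j with _ | _ | j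
  · rw [h0, ← hs]
    exact hp.fst_succ_lt_snd (by omega)
  · refine hp.fst_lt_snd_of_snd_lt hR (by omega) (hq.mem_s17 hj) ?_
    rw [show s + 2 = N + 1 by omega, ← h0]
    exact hq.snd_one_lt hj
  · refine hp.fst_lt_snd_of_snd_lt hR (by omega) (hq.mem_s17 hj)
      ((hq.snd_le_fst hj).trans_lt ?_)
    exact IH j (by omega) (by omega) (s + 2) (by omega)

end IsOpConcat

theorem IsConcat.lt_snd_of_isOpSupport (hR : RelSet R) {s m a : ℕ} {p : ℕ → Iv}
    (hp : IsConcat R (s + m + 1) p) (hm : 1 ≤ m) (hw : IsOpSupport R m (a, (p (s + m)).2)) :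
    a < (p (s + 1)).2 := by
  obtain ⟨m, rfl⟩ : ∃ m', m = m' + 1 := ⟨m - 1, by omega⟩
  rcases m with _ | m
  · have h : (p (s + 1)).2 = a + 1 := hw
    omega
  · obtain ⟨q, hq, hqa, hq0⟩ := hw
    have hp' : IsConcat R (s + m + 1 + 2) p := by
      rwa [show s + m + 1 + 2 = s + (m + 1 + 1) + 1 by omega]
    have hlast : q 0 = p (s + m + 1 + 1) :=
      hR.eq_of_snd_eq (hq.mem_s17 (by omega)) (hp'.mem_s17 (by omega)) hq0
    rw [← show (q m).1 = a from hqa]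
    exact hq.fst_lt_snd_of_eq_last hR hp' hlast m (by omega) (s + 1) (by omega)

end Concatenations

theorem statement17_general (R : Set Iv) (hR : RelSet R) (n m : ℕ) (hn : 2 ≤ n)
    (heven : Even n) (hm : 1 ≤ m)
    (p : ℕ → Iv) (hp : IsConcat R (n + m - 1) p) (c : Iv)
    (hw' : IsSupport R n ((p 0).1, c.1))
    (hw'' : IsOpSupport R m (c.2, (p (n + m - 2)).2)) :
    ∀ v : Iv, IsSupport R n v → (p 0).1 ≤ v.1 → v.2 ≤ c.2 →
      v = ((p 0).1, c.1) := by
  obtain ⟨n, rfl⟩ : ∃ n', n = n' + 2 := ⟨n - 2, by omega⟩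
  rintro v ⟨q, hq, hq0, hqn⟩ hv1 hv2
  obtain ⟨p', hp', hp'0, hp'n⟩ := hw'
  rw [show n + 2 + m - 1 = n + m + 1 by omega] at hp
  rw [show n + 2 + m - 2 = n + m by omega] at hw''
  have hc1 : (p n).2 = c.1 := by
    rw [hp.eq_of_fst_eq hR hp' (by omega) hp'0.symm n (by omega)]
    exact hp'n
  have hu : c.2 < (p (n + 1)).2 := hp.lt_snd_of_isOpSupport hR hm hw''
  rcases (hq0 ▸ hv1 : (p 0).1 ≤ (q 0).1).eq_or_lt with h0 | h0
  · have := hp.eq_of_fst_eq hR hq (by omega) h0 n (by omega)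
    ext
    · exact hq0.symm.trans h0.symm
    · rw [← hqn, ← this, hc1]
  · have heven' : Even n := (Nat.even_add.1 heven).2 even_two
    have hshift := hp.fst_succ_le_fst_of_even hR hq (by omega) h0 heven' (by omega)
    have := (hR.fst_le_fst_iff (hp.mem_s17 (by omega)) (hq.mem_s17 (by omega))).1 hshift
    omega

/-- **Remark (f par) / Statement 17.** If `n` is even and `w ∈ AP_{n+m}`
factors as `w = w' u w''` (`w' ∈ AP_n`, `w'' ∈ AP_m^{op}`), then the only
`ψ ∈ AP_n` with `L(ψ) ψ R(ψ) = w' u` is `ψ = w'` itself (with `R(ψ) = u`);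
consequently the lifting map satisfies
`f_n(1 ⊗ w ⊗ 1) = 1 ⊗ w' ⊗ u·f̂(w'')`.  (Interval model: `w` runs from
`(p 0).1` to `(p (n+m-2)).2`, `w' = [(p 0).1, c.1]`, `u = [c.1, c.2]`,
`w'' = [c.2, (p (n+m-2)).2]`.) -/
theorem statement17 (R : Set Iv) (hR : RelSet R) (n m : ℕ) (hn : 2 ≤ n)
    (heven : Even n) (hm : 1 ≤ m)
    (p : ℕ → Iv) (hp : IsConcat R (n + m - 1) p) (c : Iv)
    (hc0 : (p 0).1 ≤ c.1) (hc : c.1 ≤ c.2) (hc2 : c.2 ≤ (p (n + m - 2)).2)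
    (hw' : IsSupport R n ((p 0).1, c.1))
    (hw'' : IsOpSupport R m (c.2, (p (n + m - 2)).2)) :
    ∀ v : Iv, IsSupport R n v → (p 0).1 ≤ v.1 → v.2 ≤ c.2 →
      v = ((p 0).1, c.1) :=
  statement17_general R hR n m hn heven hm p hp c hw' hw''

end Paper
end
end
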